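/- arXiv:0804.3089 — 4 statements merged into one kernel-verified Lean document; each statement's English description precedes it below -/
import Mathlib

section
/- Let (X,ρ) be a Polish metric space and let μ be a probability measure on X satisfying the Talagrand inequality T₂(1/a) for some a > 0, i.e. T₂(ν,μ) ≤ (1/a)·H(ν|μ) for every probability measure ν on X. Then for every integer n ≥ 1 and every measurable set A ⊆ Xⁿ with μ⊗ⁿ(A) ≥ 1/2, one has μ⊗ⁿ(Aʳ) ≥ 1 − exp(−a(r−r₀)²) for all r ≥ r₀, where r₀ = √(log 2 / a) and Aʳ is the r-enlargement of A with respect to the metric ρ₂ⁿ(x,y) = (Σᵢ₌₁ⁿ ρ(xⁱ,yⁱ)²)^{1/2}. -/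
/-!
By the Bobkov–Götze duality, `T₂(1/a)` yields `∫ exp (Q f) dμ ≤ exp (∫ f dμ)` for bounded
Lipschitz `f`, where `Q f y = inf_x (f x + a ρ(x, y)²)`: apply `T₂` to the tilted measure
`ν ∝ exp (Q f) μ`, whose entropy relative to `μ` is `∫ Q f dν - log ∫ exp (Q f) dμ`, and integrate
`Q f x - f y ≤ a ρ(x, y)²` against a coupling of `ν` and `μ`. Unlike `T₂` itself, this dual
inequality tensorizes by integrating out one coordinate at a time, so `μ^⊗n` satisfies it for the
cost `a (ρ₂ⁿ)²`.
Applied to `t Φ`, where `Φ` is the `ρ₂ⁿ`-distance to `A` truncated at `r`, it gives the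
sub-Gaussian bound `∫ exp (t Φ) ≤ exp (t EΦ + t²/(4a))`. The choice `t = -2a EΦ` together with
`μ^⊗n(A) ≥ 1/2` forces `EΦ ≤ r₀`, and Chernoff's bound with `t = 2a (r - EΦ)` then controls
`μ^⊗n(Φ ≥ r)`, the complement of which lies in `Aʳ`.
-/

open MeasureTheory Filter Set
open scoped ENNReal NNReal Topology Pointwise Classical

noncomputable section

/-- Optimal transportation cost for cost function `c`, infimum over couplings. -/
def transportCost {α : Type*} [MeasurableSpace α] (c : α → α → ℝ≥0∞)
    (ν₁ ν₂ : Measure α) : ℝ≥0∞ :=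
  ⨅ (π : Measure (α × α)) (_ : π.fst = ν₁ ∧ π.snd = ν₂), ∫⁻ p, c p.1 p.2 ∂π

/-- Relative entropy `H(ν|μ)`. -/
def relEntropy {α : Type*} [MeasurableSpace α] (ν μ : Measure α) : ℝ≥0∞ :=
  if ν ≪ μ ∧ Integrable (fun x => Real.log ((ν.rnDeriv μ x).toReal)) ν
  then ENNReal.ofReal (∫ x, Real.log ((ν.rnDeriv μ x).toReal) ∂ν)
  else ∞

/-- Empirical measure of the tuple `x`. -/
def empMeasure {α : Type*} [MeasurableSpace α] {n : ℕ} (x : Fin n → α) : Measure α :=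
  (n : ℝ≥0∞)⁻¹ • ∑ i, Measure.dirac (x i)

/-- Wasserstein distance of order `p`. -/
def Wp {α : Type*} [PseudoEMetricSpace α] [MeasurableSpace α] (p : ℝ)
    (ν₁ ν₂ : Measure α) : ℝ :=
  ((transportCost (fun x y => edist x y ^ p) ν₁ ν₂) ^ (1 / p)).toReal

/-- Length of the gradient `|∇f|(x)`. -/
def gradLen {α : Type*} [MetricSpace α] (f : α → ℝ) (x : α) : ℝ :=
  Filter.limsup (fun y => |f x - f y| / dist x y) (𝓝[≠] x)

/-- Subgradient norm `|∇⁻f|(x)`. -/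
def subGradLen {α : Type*} [MetricSpace α] (f : α → ℝ) (x : α) : ℝ :=
  Filter.limsup (fun y => max (f y - f x) 0 / dist x y) (𝓝[≠] x)

/-- Entropy functional `Ent_μ(g)`. -/
def entFun {α : Type*} [MeasurableSpace α] (μ : Measure α) (g : α → ℝ) : ℝ :=
  ∫ x, g x * Real.log (g x) ∂μ - (∫ x, g x ∂μ) * Real.log (∫ x, g x ∂μ)

/-- Logarithmic Sobolev inequality `LSI(C)`. -/
def LSI {α : Type*} [MetricSpace α] [MeasurableSpace α] (μ : Measure α) (C : ℝ) : Prop :=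
  ∀ f : α → ℝ, LocallyLipschitz f →
    entFun μ (fun x => (f x) ^ 2) ≤ C * ∫ x, (gradLen f x) ^ 2 ∂μ


open InformationTheory Real

section InfConv

variable {α : Type*}

def infConv (c : α → α → ℝ) (f : α → ℝ) (y : α) : ℝ :=
  ⨅ x, f x + c x y

variable {c : α → α → ℝ} {f : α → ℝ} {M : ℝ}

lemma bddBelow_range_add_cost (hc : ∀ x y, 0 ≤ c x y) (hf : ∀ x, -M ≤ f x) (y : α) :
    BddBelow (range fun x => f x + c x y) :=
  ⟨-M, by rintro _ ⟨x, rfl⟩; linarith [hf x, hc x y]⟩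

lemma infConv_le (hc : ∀ x y, 0 ≤ c x y) (hf : ∀ x, -M ≤ f x) (x y : α) :
    infConv c f y ≤ f x + c x y :=
  ciInf_le (bddBelow_range_add_cost hc hf y) x

lemma le_infConv [Nonempty α] (hc : ∀ x y, 0 ≤ c x y) (hf : ∀ x, -M ≤ f x) (y : α) :
    -M ≤ infConv c f y :=
  le_ciInf fun x => by linarith [hf x, hc x y]

lemma measurable_infConv [TopologicalSpace α] [MeasurableSpace α] [OpensMeasurableSpace α]
    (hc : ∀ x y, 0 ≤ c x y) (hc_cont : ∀ x, Continuous (c x)) (hf : ∀ x, -M ≤ f x) :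
    Measurable (infConv c f) :=
  (upperSemicontinuous_ciInf (bddBelow_range_add_cost hc hf)
    fun x => (continuous_const.add (hc_cont x)).upperSemicontinuous).measurable

end InfConv

section LipschitzIntegrals

variable {α β : Type*}

lemma LipschitzWith.ciInf [PseudoMetricSpace α] {ι : Type*} [Nonempty ι] {f : ι → α → ℝ}
    {K : ℝ≥0} (hf : ∀ i, LipschitzWith K (f i)) (hbdd : ∀ x, BddBelow (range fun i => f i x)) :
    LipschitzWith K fun x => ⨅ i, f i x :=
  LipschitzWith.of_le_add_mul K fun x y => by
    rw [← sub_le_iff_le_add]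
    exact le_ciInf fun i => by linarith [ciInf_le (hbdd x) i, (hf i).le_add_mul x y]

lemma MeasureTheory.Integrable.of_abs_le [MeasurableSpace α] {μ : Measure α} [IsFiniteMeasure μ]
    {f : α → ℝ} (hf : AEStronglyMeasurable f μ) {M : ℝ} (hM : ∀ x, |f x| ≤ M) : Integrable f μ :=
  .of_bound hf M (ae_of_all _ fun x => (norm_eq_abs _).trans_le (hM x))

lemma LipschitzWith.integrable [PseudoMetricSpace α] [MeasurableSpace α] [OpensMeasurableSpace α]
    {μ : Measure α} [IsFiniteMeasure μ] {f : α → ℝ} {K : ℝ≥0} (hf : LipschitzWith K f) {M : ℝ}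
    (hM : ∀ x, |f x| ≤ M) : Integrable f μ :=
  .of_abs_le hf.continuous.aestronglyMeasurable hM

lemma abs_integral_le_of_abs_le [MeasurableSpace α] {μ : Measure α} [IsProbabilityMeasure μ]
    {f : α → ℝ} {M : ℝ} (hM : ∀ x, |f x| ≤ M) : |∫ x, f x ∂μ| ≤ M := by
  simpa using norm_integral_le_of_norm_le_const (μ := μ)
    (ae_of_all _ fun x => (norm_eq_abs (f x)).trans_le (hM x))

lemma lipschitzWith_integral [PseudoMetricSpace α] [MeasurableSpace β] {ν : Measure β}
    [IsProbabilityMeasure ν] {f : α → β → ℝ} {K : ℝ≥0} (hf : ∀ y, LipschitzWith K (f · y))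
    (hint : ∀ x, Integrable (f x) ν) : LipschitzWith K fun x => ∫ y, f x y ∂ν :=
  LipschitzWith.of_dist_le_mul fun x x' => by
    rw [Real.dist_eq, ← integral_sub (hint x) (hint x')]
    exact abs_integral_le_of_abs_le fun y => by simpa [Real.dist_eq] using (hf y).dist_le_mul x x'

end LipschitzIntegrals

section InfConvProd

variable {α β : Type*} {c₁ : α → α → ℝ} {M : ℝ}

lemma infConv_prod_le [Nonempty α] [Nonempty β] {c₂ : β → β → ℝ} {f : α × β → ℝ}
    (hc₁ : ∀ x y, 0 ≤ c₁ x y) (hc₂ : ∀ x y, 0 ≤ c₂ x y) (hf : ∀ z, -M ≤ f z) (y₁ : α) (y₂ : β) :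
    infConv (fun p q => c₁ p.1 q.1 + c₂ p.2 q.2) f (y₁, y₂) ≤
      infConv c₂ (fun x₂ => infConv c₁ (fun x₁ => f (x₁, x₂)) y₁) y₂ :=
  le_ciInf fun x₂ => by
    rw [← sub_le_iff_le_add]
    refine le_ciInf fun x₁ => ?_
    linarith [infConv_le (fun p q => add_nonneg (hc₁ p.1 q.1) (hc₂ p.2 q.2)) hf (x₁, x₂) (y₁, y₂)]

lemma integral_infConv_le [Nonempty α] [MeasurableSpace β] {ν : Measure β}
    [IsProbabilityMeasure ν] {f : α → β → ℝ} (hc₁ : ∀ x y, 0 ≤ c₁ x y)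
    (hf : ∀ x₁ x₂, -M ≤ f x₁ x₂) (hint : ∀ x₁, Integrable (f x₁) ν) {y₁ : α}
    (hint' : Integrable (fun x₂ => infConv c₁ (f · x₂) y₁) ν) :
    ∫ x₂, infConv c₁ (f · x₂) y₁ ∂ν ≤ infConv c₁ (fun x₁ => ∫ x₂, f x₁ x₂ ∂ν) y₁ :=
  le_ciInf fun x₁ => by
    refine (integral_mono hint' ((hint x₁).add (integrable_const (c₁ x₁ y₁)))
      fun x₂ => infConv_le hc₁ (hf · x₂) x₁ y₁).trans_eq ?_
    simp only [Pi.add_apply]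
    rw [integral_add (hint x₁) (integrable_const _)]
    simp

end InfConvProd

def BobkovGoetzeIneq {α : Type*} [PseudoMetricSpace α] [MeasurableSpace α] (μ : Measure α)
    (c : α → α → ℝ) : Prop :=
  ∀ (f : α → ℝ) (K : ℝ≥0) (M : ℝ), LipschitzWith K f → (∀ x, |f x| ≤ M) →
    ∫⁻ y, ENNReal.ofReal (exp (infConv c f y)) ∂μ ≤ ENNReal.ofReal (exp (∫ x, f x ∂μ))

namespace BobkovGoetzeIneq

variable {α β : Type*} [PseudoMetricSpace α] [MeasurableSpace α] [PseudoMetricSpace β]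
  [MeasurableSpace β]

lemma zero_of_subsingleton [Subsingleton α] (μ : Measure α) [IsProbabilityMeasure μ] :
    BobkovGoetzeIneq μ fun _ _ => 0 := by
  intro f _ _ _ _
  have := nonempty_of_isProbabilityMeasure μ
  have hf : f = fun _ => f (Classical.arbitrary α) :=
    funext fun x => congrArg f (Subsingleton.elim _ _)
  rw [hf]
  simp [infConv]

theorem prod [OpensMeasurableSpace α] [OpensMeasurableSpace β] [SecondCountableTopologyEither α β]
    {μ : Measure α} {ν : Measure β} [IsProbabilityMeasure μ] [IsProbabilityMeasure ν]
    {c₁ : α → α → ℝ} {c₂ : β → β → ℝ} (hc₁ : ∀ x y, 0 ≤ c₁ x y) (hc₂ : ∀ x y, 0 ≤ c₂ x y)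
    (h₁ : BobkovGoetzeIneq μ c₁) (h₂ : BobkovGoetzeIneq ν c₂) :
    BobkovGoetzeIneq (μ.prod ν) fun p q => c₁ p.1 q.1 + c₂ p.2 q.2 := by
  intro f K M hf hfM
  have := nonempty_of_isProbabilityMeasure μ
  have := nonempty_of_isProbabilityMeasure ν
  have hfM' : ∀ z, -M ≤ f z := fun z => (abs_le.1 (hfM z)).1
  set g : α → β → ℝ := fun y₁ x₂ => infConv c₁ (fun x₁ => f (x₁, x₂)) y₁
  set F : α → ℝ := fun x₁ => ∫ x₂, f (x₁, x₂) ∂ν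
  have hf_int : ∀ x₁, Integrable (fun x₂ => f (x₁, x₂)) ν := fun x₁ =>
    (hf.comp (LipschitzWith.prodMk_left x₁)).integrable fun _ => hfM _
  have hg_lip : ∀ y₁, LipschitzWith K (g y₁) := fun y₁ =>
    LipschitzWith.ciInf (fun x₁ => by
      simpa using (hf.comp (LipschitzWith.prodMk_left x₁)).add (LipschitzWith.const (c₁ x₁ y₁)))
      fun x₂ => bddBelow_range_add_cost hc₁ (fun x₁ => hfM' _) y₁
  have hg_bdd : ∀ y₁ x₂, |g y₁ x₂| ≤ M + c₁ y₁ y₁ := fun y₁ x₂ => abs_le.2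
    ⟨by linarith [le_infConv hc₁ (fun x₁ => hfM' (x₁, x₂)) y₁, hc₁ y₁ y₁],
      by linarith [infConv_le hc₁ (fun x₁ => hfM' (x₁, x₂)) y₁ y₁, (abs_le.1 (hfM (y₁, x₂))).2]⟩
  have hF_lip : LipschitzWith K F :=
    lipschitzWith_integral (fun x₂ => by
      simpa [Function.comp_def] using hf.comp (LipschitzWith.prodMk_right x₂)) hf_int
  have hF_bdd : ∀ x₁, |F x₁| ≤ M := fun x₁ => abs_integral_le_of_abs_le fun x₂ => hfM _
  calc ∫⁻ y, ENNReal.ofReal (exp (infConv _ f y)) ∂μ.prod ν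
      ≤ ∫⁻ y₁, ∫⁻ y₂, ENNReal.ofReal (exp (infConv _ f (y₁, y₂))) ∂ν ∂μ := lintegral_prod_le _
    _ ≤ ∫⁻ y₁, ∫⁻ y₂, ENNReal.ofReal (exp (infConv c₂ (g y₁) y₂)) ∂ν ∂μ := by
      gcongr with y₁ y₂
      exact infConv_prod_le hc₁ hc₂ hfM' y₁ y₂
    _ ≤ ∫⁻ y₁, ENNReal.ofReal (exp (∫ x₂, g y₁ x₂ ∂ν)) ∂μ :=
      lintegral_mono fun y₁ => h₂ _ _ _ (hg_lip y₁) (hg_bdd y₁)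
    _ ≤ ∫⁻ y₁, ENNReal.ofReal (exp (infConv c₁ F y₁)) ∂μ := by
      gcongr with y₁
      exact integral_infConv_le hc₁ (fun x₁ x₂ => hfM' (x₁, x₂)) hf_int
        ((hg_lip y₁).integrable (hg_bdd y₁))
    _ ≤ ENNReal.ofReal (exp (∫ x₁, F x₁ ∂μ)) := h₁ F K M hF_lip hF_bdd
    _ = ENNReal.ofReal (exp (∫ z, f z ∂μ.prod ν)) := by
      rw [integral_prod f (hf.integrable hfM)]

theorem of_measurePreserving {μ : Measure α} {ν : Measure β} {c : β → β → ℝ}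
    {c' : α → α → ℝ} (e : α ≃ᵐ β) (he : MeasurePreserving e μ ν) {L : ℝ≥0}
    (hL : LipschitzWith L e.symm) (hc : ∀ x y, c' x y = c (e x) (e y))
    (h : BobkovGoetzeIneq ν c) : BobkovGoetzeIneq μ c' := by
  intro f K M hf hfM
  have hQ : ∀ x, infConv c' f x = infConv c (f ∘ e.symm) (e x) := fun x => by
    simp only [infConv, hc, ← e.toEquiv.iInf_comp (g := fun y => (f ∘ e.symm) y + c y (e x))]
    simp
  calc ∫⁻ x, ENNReal.ofReal (exp (infConv c' f x)) ∂μ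
      = ∫⁻ y, ENNReal.ofReal (exp (infConv c (f ∘ e.symm) y)) ∂ν := by
        simp_rw [hQ]
        exact he.lintegral_comp_emb e.measurableEmbedding
          fun y => ENNReal.ofReal (exp (infConv c (f ∘ e.symm) y))
    _ ≤ ENNReal.ofReal (exp (∫ y, f (e.symm y) ∂ν)) :=
      h _ (K * L) M (hf.comp hL) fun y => hfM _
    _ = ENNReal.ofReal (exp (∫ x, f x ∂μ)) := by
      rw [← he.integral_comp' (fun y => f (e.symm y))]
      simp

theorem pi [SecondCountableTopology α] [OpensMeasurableSpace α] {μ : Measure α}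
    [IsProbabilityMeasure μ] {c : α → α → ℝ} (hc : ∀ x y, 0 ≤ c x y)
    (h : BobkovGoetzeIneq μ c) (n : ℕ) :
    BobkovGoetzeIneq (Measure.pi fun _ : Fin n => μ) fun x y => ∑ i, c (x i) (y i) := by
  induction n with
  | zero => simpa using zero_of_subsingleton (Measure.pi fun _ : Fin 0 => μ)
  | succ n ih =>
    refine (h.prod hc (fun x y => Finset.sum_nonneg fun i _ => hc _ _) ih).of_measurePreserving
      (MeasurableEquiv.piFinSuccAbove (fun _ => α) 0)
      (measurePreserving_piFinSuccAbove (fun _ => μ) 0) (L := 1) ?_ fun x y => ?_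
    · refine LipschitzWith.of_dist_le_mul fun p q => ?_
      rw [NNReal.coe_one, one_mul, dist_pi_le_iff dist_nonneg]
      intro i
      refine Fin.cases ?_ (fun j => ?_) i
      · simp [MeasurableEquiv.piFinSuccAbove_symm_apply, Prod.dist_eq]
      · simpa [MeasurableEquiv.piFinSuccAbove_symm_apply, Prod.dist_eq] using
          Or.inr (dist_le_pi_dist p.2 q.2 j)
    · simp [Fin.sum_univ_succ, Fin.tail]

end BobkovGoetzeIneq

section Transport

variable {α : Type*}

lemma relEntropy_eq_klDiv [MeasurableSpace α] {ν μ : Measure α} [IsProbabilityMeasure ν]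
    [IsProbabilityMeasure μ] : relEntropy ν μ = klDiv ν μ := by
  unfold relEntropy
  split_ifs with h
  · rw [klDiv_of_ac_of_integrable h.1 h.2]
    simp [llr]
  · rcases not_and_or.1 h with h | h
    · exact (klDiv_of_not_ac h).symm
    · exact (klDiv_of_not_integrable h).symm

lemma transportCost_const_mul [MeasurableSpace α] (c : α → α → ℝ≥0∞) (ν μ : Measure α)
    {C : ℝ≥0∞} (hC₀ : C ≠ 0) (hC : C ≠ ∞) :
    transportCost (fun x y => C * c x y) ν μ = C * transportCost c ν μ := by
  simp only [transportCost, ENNReal.mul_iInf_of_ne hC₀ hC, lintegral_const_mul' _ _ hC]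

lemma ofReal_integral_le_lintegral_ofReal [MeasurableSpace α] {μ : Measure α} {f : α → ℝ}
    (hf : Integrable f μ) : ENNReal.ofReal (∫ x, f x ∂μ) ≤ ∫⁻ x, ENNReal.ofReal (f x) ∂μ := by
  refine (ENNReal.ofReal_le_ofReal ?_).trans ENNReal.ofReal_toReal_le
  rw [integral_eq_lintegral_pos_part_sub_lintegral_neg_part hf]
  exact sub_le_self _ ENNReal.toReal_nonneg

lemma ofReal_integral_sub_integral_le_transportCost [MeasurableSpace α] {ν μ : Measure α}
    {c : α → α → ℝ≥0∞} {g h : α → ℝ} (hg : Integrable g ν) (hh : Integrable h μ)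
    (hgh : ∀ x y, ENNReal.ofReal (g x - h y) ≤ c x y) :
    ENNReal.ofReal (∫ x, g x ∂ν - ∫ y, h y ∂μ) ≤ transportCost c ν μ := by
  refine le_iInf₂ fun γ hγ => ?_
  obtain ⟨rfl, rfl⟩ := hγ
  have hg' : Integrable (fun p : α × α => g p.1) γ := hg.comp_measurable measurable_fst
  have hh' : Integrable (fun p : α × α => h p.2) γ := hh.comp_measurable measurable_snd
  rw [Measure.fst, Measure.snd, integral_map measurable_fst.aemeasurable hg.1,
    integral_map measurable_snd.aemeasurable hh.1, ← integral_sub hg' hh']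
  exact (ofReal_integral_le_lintegral_ofReal (hg'.sub hh')).trans
    (lintegral_mono fun p => hgh p.1 p.2)

section Tilted

variable [MeasurableSpace α] {μ : Measure α} [IsProbabilityMeasure μ] {q : α → ℝ} {M : ℝ}

lemma integrable_exp_of_abs_le (hq : Measurable q) (hqM : ∀ x, |q x| ≤ M) :
    Integrable (fun x => exp (q x)) μ :=
  .of_abs_le (by fun_prop) fun x => by
    rw [abs_of_pos (exp_pos _)]
    exact exp_le_exp.2 (abs_le.1 (hqM x)).2

lemma llr_tilted_self_ae_eq (hq : Measurable q) (hqM : ∀ x, |q x| ≤ M) :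
    llr (μ.tilted q) μ =ᵐ[μ.tilted q] fun x => q x - log (∫ x, exp (q x) ∂μ) := by
  refine (tilted_absolutelyContinuous μ q).ae_le ?_
  filter_upwards [llr_tilted_left (Measure.AbsolutelyContinuous.refl μ)
    (integrable_exp_of_abs_le hq hqM) hq.aemeasurable, llr_self μ] with x hx hx'
  simp [hx, hx']

lemma klDiv_tilted_self_ne_top (hq : Measurable q) (hqM : ∀ x, |q x| ≤ M) :
    klDiv (μ.tilted q) μ ≠ ∞ :=
  klDiv_ne_top (tilted_absolutelyContinuous μ q)
    (((Integrable.of_abs_le hq.aestronglyMeasurable hqM).sub (integrable_const _)).congr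
      (llr_tilted_self_ae_eq hq hqM).symm)

lemma toReal_klDiv_tilted_self (hq : Measurable q) (hqM : ∀ x, |q x| ≤ M) :
    (klDiv (μ.tilted q) μ).toReal = ∫ x, q x ∂μ.tilted q - log (∫ x, exp (q x) ∂μ) := by
  have := isProbabilityMeasure_tilted (integrable_exp_of_abs_le (μ := μ) hq hqM)
  rw [toReal_klDiv_of_measure_eq (tilted_absolutelyContinuous μ q) (by simp),
    integral_congr_ae (llr_tilted_self_ae_eq hq hqM),
    integral_sub (.of_abs_le hq.aestronglyMeasurable hqM) (integrable_const _)]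
  simp

end Tilted

theorem bobkovGoetzeIneq_of_transportCost_le [PseudoMetricSpace α] [MeasurableSpace α]
    [OpensMeasurableSpace α] {μ : Measure α} [IsProbabilityMeasure μ] {a : ℝ} (ha : 0 < a)
    (hT : ∀ ν : Measure α, IsProbabilityMeasure ν →
      transportCost (fun x y => edist x y ^ (2 : ℝ)) ν μ ≤
        ENNReal.ofReal (1 / a) * relEntropy ν μ) :
    BobkovGoetzeIneq μ fun x y => a * dist x y ^ 2 := by
  intro f K M hf hfM
  have := nonempty_of_isProbabilityMeasure μ
  have hc : ∀ x y : α, 0 ≤ a * dist x y ^ 2 := fun x y => by positivity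
  have hfM' : ∀ x, -M ≤ f x := fun x => (abs_le.1 (hfM x)).1
  set q := infConv (fun x y => a * dist x y ^ 2) f
  have hq : Measurable q := measurable_infConv hc (fun x => by fun_prop) hfM'
  have hqM : ∀ y, |q y| ≤ M := fun y => abs_le.2
    ⟨le_infConv hc hfM' y, (infConv_le hc hfM' y y).trans (by simpa using (abs_le.1 (hfM y)).2)⟩
  have hexp := integrable_exp_of_abs_le (μ := μ) hq hqM
  set ν := μ.tilted q
  have hν : IsProbabilityMeasure ν := isProbabilityMeasure_tilted hexp
  have hcost : ∀ x y, ENNReal.ofReal (q x - f y) ≤ ENNReal.ofReal a * edist x y ^ (2 : ℝ) :=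
    fun x y => by
      rw [edist_dist, ENNReal.ofReal_rpow_of_nonneg dist_nonneg zero_le_two, rpow_two,
        ← ENNReal.ofReal_mul ha.le, dist_comm]
      exact ENNReal.ofReal_le_ofReal (by linarith [infConv_le hc hfM' y x])
  have hdual : ENNReal.ofReal (∫ x, q x ∂ν - ∫ x, f x ∂μ) ≤ klDiv ν μ :=
    calc _ ≤ transportCost (fun x y => ENNReal.ofReal a * edist x y ^ (2 : ℝ)) ν μ :=
          ofReal_integral_sub_integral_le_transportCost
            (.of_abs_le hq.aestronglyMeasurable hqM) (hf.integrable hfM) hcost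
      _ = ENNReal.ofReal a * transportCost (fun x y => edist x y ^ (2 : ℝ)) ν μ :=
          transportCost_const_mul _ _ _ (by simpa using ha) ENNReal.ofReal_ne_top
      _ ≤ ENNReal.ofReal a * (ENNReal.ofReal (1 / a) * relEntropy ν μ) := by
          gcongr
          exact hT ν hν
      _ = klDiv ν μ := by
          rw [← mul_assoc, ← ENNReal.ofReal_mul ha.le, mul_one_div_cancel ha.ne',
            ENNReal.ofReal_one, one_mul, relEntropy_eq_klDiv]
  rw [ENNReal.ofReal_le_iff_le_toReal (klDiv_tilted_self_ne_top hq hqM),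
    toReal_klDiv_tilted_self hq hqM] at hdual
  rw [← ofReal_integral_eq_lintegral_ofReal hexp (ae_of_all _ fun x => (exp_pos _).le)]
  gcongr
  rw [← log_le_iff_le_exp (integral_exp_pos hexp)]
  linarith

end Transport

theorem BobkovGoetzeIneq.lintegral_exp_mul_le {α : Type*} [PseudoMetricSpace α] [MeasurableSpace α]
    [Nonempty α] {μ : Measure α} {c : α → α → ℝ} (h : BobkovGoetzeIneq μ c) {a : ℝ} (ha : 0 < a)
    {Φ : α → ℝ} {K : ℝ≥0} {M : ℝ} (hΦ : LipschitzWith K Φ) (hΦM : ∀ x, |Φ x| ≤ M)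
    (hc : ∀ x y, a * (Φ x - Φ y) ^ 2 ≤ c x y) (t : ℝ) :
    ∫⁻ x, ENNReal.ofReal (exp (t * Φ x)) ∂μ ≤
      ENNReal.ofReal (exp (t * ∫ x, Φ x ∂μ + t ^ 2 / (4 * a))) := by
  have hQ : ∀ y, t * Φ y ≤ infConv c (fun x => t * Φ x) y + t ^ 2 / (4 * a) := fun y => by
    rw [← sub_le_iff_le_add]
    refine le_ciInf fun x => ?_
    -- `a u² + t u + t²/(4a) = (2 a u + t)² / (4 a)` with `u = Φ x - Φ y`
    have hsq : 0 ≤ a * (Φ x - Φ y) ^ 2 + t * (Φ x - Φ y) + t ^ 2 / (4 * a) := by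
      have := sq_nonneg (2 * a * (Φ x - Φ y) + t)
      field_simp
      nlinarith
    linarith [hc x y]
  calc ∫⁻ x, ENNReal.ofReal (exp (t * Φ x)) ∂μ
      ≤ ∫⁻ x, ENNReal.ofReal (exp (t ^ 2 / (4 * a))) *
          ENNReal.ofReal (exp (infConv c (fun x => t * Φ x) x)) ∂μ := by
        gcongr with x
        rw [← ENNReal.ofReal_mul (exp_pos _).le, ← exp_add]
        gcongr
        linarith [hQ x]
    _ = ENNReal.ofReal (exp (t ^ 2 / (4 * a))) *
          ∫⁻ x, ENNReal.ofReal (exp (infConv c (fun x => t * Φ x) x)) ∂μ :=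
        lintegral_const_mul' _ _ ENNReal.ofReal_ne_top
    _ ≤ ENNReal.ofReal (exp (t ^ 2 / (4 * a))) * ENNReal.ofReal (exp (∫ x, t * Φ x ∂μ)) := by
        gcongr
        exact h _ (‖t‖₊ * K) (|t| * M) ((lipschitzWith_smul t).comp hΦ) fun x => by
          rw [abs_mul]; exact mul_le_mul_of_nonneg_left (hΦM x) (abs_nonneg t)
    _ = ENNReal.ofReal (exp (t * ∫ x, Φ x ∂μ + t ^ 2 / (4 * a))) := by
        rw [← ENNReal.ofReal_mul (exp_pos _).le, ← exp_add, integral_const_mul, add_comm]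

section Concentration

variable {α : Type*} [MeasurableSpace α] {μ : Measure α} {Φ : α → ℝ} {a m : ℝ}

lemma mul_measure_le_lintegral_exp_mul (hΦ : Measurable Φ) {t r : ℝ} (ht : 0 ≤ t) :
    ENNReal.ofReal (exp (t * r)) * μ {x | r ≤ Φ x} ≤ ∫⁻ x, ENNReal.ofReal (exp (t * Φ x)) ∂μ := by
  refine le_trans ?_ (mul_meas_ge_le_lintegral₀ (by fun_prop) (ENNReal.ofReal (exp (t * r))))
  gcongr with x
  exact fun hx => by gcongr

theorem mean_le_sqrt_log_two_div_of_lintegral_exp_le (hΦ : Measurable Φ) (ha : 0 < a)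
    (hm : 0 ≤ m) (hL : ∀ t : ℝ, ∫⁻ x, ENNReal.ofReal (exp (t * Φ x)) ∂μ ≤
      ENNReal.ofReal (exp (t * m + t ^ 2 / (4 * a))))
    {A : Set α} (hA : 1 / 2 ≤ μ A) (hΦA : ∀ x ∈ A, Φ x ≤ 0) : m ≤ √(log 2 / a) := by
  have h : ENNReal.ofReal (1 / 2) ≤ ENNReal.ofReal (exp (-(a * m ^ 2))) :=
    calc ENNReal.ofReal (1 / 2) ≤ μ A := by simpa using hA
      _ ≤ μ {x | 0 ≤ -Φ x} := measure_mono fun x hx => neg_nonneg.2 (hΦA x hx)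
      _ = ENNReal.ofReal (exp (2 * a * m * 0)) * μ {x | 0 ≤ -Φ x} := by simp
      _ ≤ ∫⁻ x, ENNReal.ofReal (exp (2 * a * m * -Φ x)) ∂μ :=
        mul_measure_le_lintegral_exp_mul hΦ.neg (by positivity)
      _ ≤ ENNReal.ofReal (exp (-(2 * a * m) * m + (-(2 * a * m)) ^ 2 / (4 * a))) := by
        simpa only [mul_neg, neg_mul] using hL (-(2 * a * m))
      _ = ENNReal.ofReal (exp (-(a * m ^ 2))) := by
        congr 2
        field_simp
        ring
  have h2 := log_le_log (by norm_num) ((ENNReal.ofReal_le_ofReal_iff (exp_pos _).le).1 h)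
  rw [log_exp, one_div, log_inv] at h2
  rw [le_sqrt hm (div_nonneg (log_nonneg one_le_two) ha.le), le_div_iff₀ ha]
  linarith

theorem measure_ge_le_exp_of_lintegral_exp_le (hΦ : Measurable Φ) (ha : 0 < a)
    (hL : ∀ t : ℝ, ∫⁻ x, ENNReal.ofReal (exp (t * Φ x)) ∂μ ≤
      ENNReal.ofReal (exp (t * m + t ^ 2 / (4 * a))))
    {r : ℝ} (hr : m ≤ r) : μ {x | r ≤ Φ x} ≤ ENNReal.ofReal (exp (-a * (r - m) ^ 2)) := by
  set t := 2 * a * (r - m)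
  have h : ENNReal.ofReal (exp (t * r)) * μ {x | r ≤ Φ x} ≤
      ENNReal.ofReal (exp (t * r)) * ENNReal.ofReal (exp (-a * (r - m) ^ 2)) :=
    calc _ ≤ ∫⁻ x, ENNReal.ofReal (exp (t * Φ x)) ∂μ :=
          mul_measure_le_lintegral_exp_mul hΦ (by simp only [t]; nlinarith)
      _ ≤ ENNReal.ofReal (exp (t * m + t ^ 2 / (4 * a))) := hL t
      _ = _ := by
          rw [← ENNReal.ofReal_mul (exp_pos _).le, ← exp_add]
          congr 2
          field_simp
          ring
  exact (ENNReal.mul_le_mul_iff_right (by simp [exp_pos]) ENNReal.ofReal_ne_top).1 h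

theorem measure_ge_le_exp_sq_of_lintegral_exp_le (hΦ : Measurable Φ) (ha : 0 < a)
    (hm : 0 ≤ m) (hL : ∀ t : ℝ, ∫⁻ x, ENNReal.ofReal (exp (t * Φ x)) ∂μ ≤
      ENNReal.ofReal (exp (t * m + t ^ 2 / (4 * a))))
    {A : Set α} (hA : 1 / 2 ≤ μ A) (hΦA : ∀ x ∈ A, Φ x ≤ 0) {r : ℝ} (hr : √(log 2 / a) ≤ r) :
    μ {x | r ≤ Φ x} ≤ ENNReal.ofReal (exp (-a * (r - √(log 2 / a)) ^ 2)) := by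
  have hm₀ := mean_le_sqrt_log_two_div_of_lintegral_exp_le hΦ ha hm hL hA hΦA
  refine (measure_ge_le_exp_of_lintegral_exp_le hΦ ha hL (hm₀.trans hr)).trans
    (ENNReal.ofReal_le_ofReal (exp_le_exp.2 ?_))
  have := pow_le_pow_left₀ (sub_nonneg.2 hr) (sub_le_sub_left hm₀ r) 2
  nlinarith

end Concentration

section TruncatedDistance

variable {ι X : Type*} [Fintype ι] [PseudoMetricSpace X]

-- `WithLp.toLp 2` carries the `ℓ²` distance `ρ₂ⁿ`; `ι → X` itself has the sup distance.
def truncInfDistL2 (A : Set (ι → X)) (r : ℝ) (y : ι → X) : ℝ :=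
  min (Metric.infDist (WithLp.toLp 2 y) (WithLp.toLp 2 '' A)) r

lemma dist_toLp_two (x y : ι → X) :
    dist (WithLp.toLp 2 x) (WithLp.toLp 2 y) = √(∑ i, dist (x i) (y i) ^ 2) := by
  rw [PiLp.dist_eq_sum (by norm_num), sqrt_eq_rpow]
  simp

variable {A : Set (ι → X)} {r : ℝ}

lemma truncInfDistL2_nonneg (hr : 0 ≤ r) (y : ι → X) : 0 ≤ truncInfDistL2 A r y :=
  le_min Metric.infDist_nonneg hr

lemma truncInfDistL2_nonpos_of_mem {y : ι → X} (hy : y ∈ A) : truncInfDistL2 A r y ≤ 0 :=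
  (min_le_left _ _).trans (Metric.infDist_zero_of_mem (mem_image_of_mem _ hy)).le

lemma sq_sub_truncInfDistL2_le (x y : ι → X) :
    (truncInfDistL2 A r x - truncInfDistL2 A r y) ^ 2 ≤ ∑ i, dist (x i) (y i) ^ 2 := by
  have h := (((Metric.lipschitz_infDist_pt (WithLp.toLp 2 '' A)).min_const r).dist_le_mul
    (WithLp.toLp 2 x) (WithLp.toLp 2 y))
  rw [NNReal.coe_one, one_mul, Real.dist_eq, dist_toLp_two] at h
  rw [← sq_abs, ← sq_sqrt (Finset.sum_nonneg fun i _ => sq_nonneg (dist (x i) (y i)))]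
  exact pow_le_pow_left₀ (abs_nonneg _) h 2

lemma compl_setOf_le_truncInfDistL2_subset (hA : A.Nonempty) :
    {y | r ≤ truncInfDistL2 A r y}ᶜ ⊆ {y | ∃ x ∈ A, √(∑ i, dist (y i) (x i) ^ 2) ≤ r} := by
  intro y hy
  have hy : Metric.infDist (WithLp.toLp 2 y) (WithLp.toLp 2 '' A) < r := by
    simpa [truncInfDistL2] using hy
  obtain ⟨_, ⟨x, hx, rfl⟩, hxy⟩ := (Metric.infDist_lt_iff (hA.image _)).1 hy
  exact ⟨x, hx, (dist_toLp_two y x).symm.trans_le hxy.le⟩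

end TruncatedDistance

/-- If `μ` satisfies Talagrand's inequality `T₂(1/a)` then the product measures `μ^⊗n` satisfy
dimension free Gaussian concentration with constants `b = 1` and `r₀ = √(log 2 / a)`. -/
theorem T2_implies_gaussian_dimFree_concentration
    {X : Type*} [MetricSpace X] [PolishSpace X] [MeasurableSpace X] [BorelSpace X]
    (μ : Measure X) [IsProbabilityMeasure μ] (a : ℝ) (ha : 0 < a)
    (hT2 : ∀ ν : Measure X, IsProbabilityMeasure ν →
      transportCost (fun x y => edist x y ^ (2 : ℝ)) ν μ ≤
        ENNReal.ofReal (1 / a) * relEntropy ν μ) :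
    ∀ n : ℕ, 1 ≤ n → ∀ A : Set (Fin n → X), MeasurableSet A →
      1 / 2 ≤ (Measure.pi fun _ : Fin n => μ) A →
      ∀ r : ℝ, Real.sqrt (Real.log 2 / a) ≤ r →
        1 - ENNReal.ofReal (Real.exp (-a * (r - Real.sqrt (Real.log 2 / a)) ^ 2)) ≤
          (Measure.pi fun _ : Fin n => μ)
            {y | ∃ x ∈ A, Real.sqrt (∑ i, dist (y i) (x i) ^ 2) ≤ r} := by
  intro n _ A _ hA r hr
  have := nonempty_of_isProbabilityMeasure μ
  have hA₀ : A.Nonempty :=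
    nonempty_of_measure_ne_zero (μ := Measure.pi fun _ => μ) fun h => by simp [h] at hA
  set Φ := truncInfDistL2 A r
  have hΦ_lip : LipschitzWith _ Φ :=
    ((Metric.lipschitz_infDist_pt _).comp (PiLp.lipschitzWith_toLp 2 _)).min_const r
  have hr₀ : 0 ≤ r := (sqrt_nonneg _).trans hr
  have hL := ((bobkovGoetzeIneq_of_transportCost_le ha hT2).pi (fun x y => by positivity)
    n).lintegral_exp_mul_le ha hΦ_lip (M := r)
    (fun y => abs_le.2 ⟨by linarith [truncInfDistL2_nonneg (A := A) hr₀ y], min_le_right _ _⟩)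
    (fun x y => by rw [← Finset.mul_sum]; gcongr; exact sq_sub_truncInfDistL2_le x y)
  have hconc := measure_ge_le_exp_sq_of_lintegral_exp_le hΦ_lip.continuous.measurable ha
    (integral_nonneg (truncInfDistL2_nonneg hr₀)) hL hA
    (fun y hy => truncInfDistL2_nonpos_of_mem hy) hr
  calc 1 - ENNReal.ofReal (exp (-a * (r - √(log 2 / a)) ^ 2))
      ≤ 1 - (Measure.pi fun _ : Fin n => μ) {y | r ≤ Φ y} := tsub_le_tsub_left hconc 1
    _ = (Measure.pi fun _ : Fin n => μ) {y | r ≤ Φ y}ᶜ :=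
      (prob_compl_eq_one_sub (measurableSet_le measurable_const
        hΦ_lip.continuous.measurable)).symm
    _ ≤ _ := measure_mono (compl_setOf_le_truncInfDistL2_subset hA₀)
end
end

section
/- (Marton's argument.) Let (X,ρ) be a Polish metric space and let μ be a probability measure on X satisfying T₁(C) for some C > 0, i.e. W₁(ν,μ) ≤ √(C·H(ν|μ)) for every probability measure ν on X. Then for every measurable A ⊆ X with μ(A) ≥ 1/2, one has μ(Aʳ) ≥ 1 − exp(−C⁻¹(r−r₀)²) for all r ≥ r₀, where r₀ = √(C·log 2) and Aʳ = {x ∈ X : ∃ x̄ ∈ A with ρ(x,x̄) ≤ r}. -/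
open MeasureTheory Filter Set
open scoped ENNReal NNReal Topology Pointwise Classical

noncomputable section

/-!
Marton's argument. Conditioning `μ` on a set `A` of positive measure costs relative entropy
`log (1 / μ A)`, so `T₁(C)` moves `μ(· | A)` to `μ` at cost at most `√(C log (1 / μ A))`. Gluing
couplings gives the triangle inequality for `W₁`, and a coupling of `μ(· | A)` with `μ(· | B)`
moves mass at least the distance between `A` and `B`; hence
`d(A, B) ≤ √(C log (1 / μ A)) + √(C log (1 / μ B))`. For `μ A ≥ 1/2` and
`B = {x | d(x, A) ≥ r}`, which contains the complement of `Aʳ`, this reads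
`r - r₀ ≤ √(C log (1 / μ B))`, i.e. `μ B ≤ exp (-(r - r₀)² / C)`.
-/

open ProbabilityTheory

section Gluing

variable {X Y Z : Type*} [MeasurableSpace X] [MeasurableSpace Y] [MeasurableSpace Z]
  [StandardBorelSpace X] [Nonempty X] [StandardBorelSpace Z] [Nonempty Z]

theorem exists_glue_of_snd_eq_fst {π₁ : Measure (X × Y)} {π₂ : Measure (Y × Z)}
    [IsFiniteMeasure π₁] [IsFiniteMeasure π₂] (h : π₁.snd = π₂.fst) :
    ∃ ξ : Measure (Y × X × Z),
      ξ.map (fun q => (q.2.1, q.1)) = π₁ ∧ ξ.map (fun q => (q.1, q.2.2)) = π₂ := by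
  set ρ : Measure (Y × X) := π₁.map Prod.swap
  have hρ : ρ.fst ⊗ₘ ρ.condKernel = ρ := ρ.disintegrate _
  have hρfst : ρ.fst = π₂.fst := by rw [Measure.fst_map_swap, h]
  -- conditionally on the shared coordinate, draw the two others independently
  refine ⟨π₂.fst ⊗ₘ (ρ.condKernel ×ₖ π₂.condKernel), ?_, ?_⟩
  · have : (fun q : Y × X × Z => (q.2.1, q.1)) = Prod.swap ∘ Prod.map id Prod.fst := rfl
    rw [this, ← Measure.map_map measurable_swap (by fun_prop),
      ← Measure.compProd_map measurable_fst, ← Kernel.fst_eq, Kernel.fst_prod, ← hρfst, hρ,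
      Measure.map_map measurable_swap measurable_swap, Prod.swap_swap_eq, Measure.map_id]
  · have : (fun q : Y × X × Z => (q.1, q.2.2)) = Prod.map id Prod.snd := rfl
    rw [this, ← Measure.compProd_map measurable_snd, ← Kernel.snd_eq, Kernel.snd_prod,
      π₂.disintegrate]

end Gluing

namespace transportCost

variable {X : Type*} [MeasurableSpace X] {c : X → X → ℝ≥0∞}

theorem le_swap (hc : ∀ x y, c x y = c y x) (ν₁ ν₂ : Measure X) :
    transportCost c ν₂ ν₁ ≤ transportCost c ν₁ ν₂ := by
  refine le_iInf₂ fun π hπ => ?_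
  refine (iInf₂_le (π.map Prod.swap) ⟨by rw [Measure.fst_map_swap, hπ.2],
    by rw [Measure.snd_map_swap, hπ.1]⟩).trans_eq ?_
  change ∫⁻ p, c p.1 p.2 ∂(π.map MeasurableEquiv.prodComm) = _
  rw [lintegral_map_equiv]
  exact lintegral_congr fun p => hc _ _

theorem comm (hc : ∀ x y, c x y = c y x) (ν₁ ν₂ : Measure X) :
    transportCost c ν₁ ν₂ = transportCost c ν₂ ν₁ :=
  (le_swap hc ν₂ ν₁).antisymm (le_swap hc ν₁ ν₂)

theorem triangle [StandardBorelSpace X] [Nonempty X] (hc : Measurable (Function.uncurry c))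
    (htri : ∀ x y z, c x z ≤ c x y + c y z) (ν₁ ν₂ ν₃ : Measure X) [IsFiniteMeasure ν₂] :
    transportCost c ν₁ ν₃ ≤ transportCost c ν₁ ν₂ + transportCost c ν₂ ν₃ := by
  refine ENNReal.le_iInf₂_add_iInf₂ fun π₁ hπ₁ π₂ hπ₂ => ?_
  have : IsFiniteMeasure π₁ := ⟨by rw [← Measure.snd_univ, hπ₁.2]; exact measure_lt_top _ _⟩
  have : IsFiniteMeasure π₂ := ⟨by rw [← Measure.fst_univ, hπ₂.1]; exact measure_lt_top _ _⟩
  obtain ⟨ξ, hξ₁, hξ₂⟩ := exists_glue_of_snd_eq_fst (hπ₁.2.trans hπ₂.1.symm)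
  have hc₂ : Measurable fun p : X × X => c p.1 p.2 := hc
  set π : Measure (X × X) := ξ.map fun q => (q.2.1, q.2.2)
  have hπ : π.fst = ν₁ ∧ π.snd = ν₃ := by
    constructor
    · rw [← hπ₁.1, ← hξ₁, Measure.fst, Measure.fst, Measure.map_map (by fun_prop) (by fun_prop),
        Measure.map_map (by fun_prop) (by fun_prop)]
      rfl
    · rw [← hπ₂.2, ← hξ₂, Measure.snd, Measure.snd, Measure.map_map (by fun_prop) (by fun_prop),
        Measure.map_map (by fun_prop) (by fun_prop)]
      rfl
  calc transportCost c ν₁ ν₃ ≤ ∫⁻ p, c p.1 p.2 ∂π := iInf₂_le π hπ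
    _ = ∫⁻ q, c q.2.1 q.2.2 ∂ξ := lintegral_map hc₂ (by fun_prop)
    _ ≤ ∫⁻ q, c q.2.1 q.1 + c q.1 q.2.2 ∂ξ := lintegral_mono fun q => htri _ _ _
    _ = ∫⁻ p, c p.1 p.2 ∂π₁ + ∫⁻ p, c p.1 p.2 ∂π₂ := by
      rw [← hξ₁, ← hξ₂, lintegral_map hc₂ (by fun_prop), lintegral_map hc₂ (by fun_prop)]
      exact lintegral_add_left
        (hc₂.comp (f := fun q : X × X × X => (q.2.1, q.1)) (by fun_prop)) _

theorem mul_measure_univ_le_of_ae_mem {ν₁ ν₂ : Measure X} {A B : Set X} {d : ℝ≥0∞}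
    (hA : ∀ᵐ x ∂ν₁, x ∈ A) (hB : ∀ᵐ y ∂ν₂, y ∈ B) (hd : ∀ x ∈ A, ∀ y ∈ B, d ≤ c x y) :
    d * ν₁ univ ≤ transportCost c ν₁ ν₂ := by
  refine le_iInf₂ fun π hπ => ?_
  have hA' := ae_of_ae_map measurable_fst.aemeasurable (hπ.1 ▸ hA)
  have hB' := ae_of_ae_map measurable_snd.aemeasurable (hπ.2 ▸ hB)
  calc d * ν₁ univ = ∫⁻ _, d ∂π := by rw [lintegral_const, ← hπ.1, Measure.fst_univ]
    _ ≤ ∫⁻ p, c p.1 p.2 ∂π := lintegral_mono_ae <| by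
      filter_upwards [hA', hB'] with p hp₁ hp₂ using hd _ hp₁ _ hp₂

end transportCost

theorem relEntropy_cond {X : Type*} [MeasurableSpace X] (μ : Measure X) [IsFiniteMeasure μ]
    {A : Set X} (hA : MeasurableSet A) (hA0 : μ A ≠ 0) :
    relEntropy μ[|A] μ = ENNReal.ofReal (-Real.log (μ A).toReal) := by
  have := cond_isProbabilityMeasure (μ := μ) hA0
  have hrn : μ[|A].rnDeriv μ =ᵐ[μ] fun x => (μ A)⁻¹ * A.indicator 1 x := by
    filter_upwards [Measure.rnDeriv_smul_left_of_ne_top (μ.restrict A) μ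
      (ENNReal.inv_ne_top.2 hA0), Measure.rnDeriv_restrict_self μ hA] with x h₁ h₂
    rw [ProbabilityTheory.cond, h₁, Pi.smul_apply, h₂, smul_eq_mul]
  have hlog : (fun x => Real.log ((μ[|A].rnDeriv μ x).toReal))
      =ᵐ[μ[|A]] fun _ => -Real.log (μ A).toReal := by
    filter_upwards [cond_absolutelyContinuous.ae_eq hrn, ae_cond_mem hA] with x h₁ h₂
    rw [h₁, indicator_of_mem h₂, Pi.one_apply, mul_one, ENNReal.toReal_inv, Real.log_inv]
  rw [relEntropy, if_pos ⟨cond_absolutelyContinuous, (integrable_const _).congr hlog.symm⟩,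
    integral_congr_ae hlog]
  simp

def T1Inequality {X : Type*} [PseudoEMetricSpace X] [MeasurableSpace X] (μ : Measure X)
    (C : ℝ) : Prop :=
  ∀ ν : Measure X, IsProbabilityMeasure ν →
    transportCost (fun x y => edist x y) ν μ ≤ (ENNReal.ofReal C * relEntropy ν μ) ^ (1 / 2 : ℝ)

namespace T1Inequality

variable {X : Type*} [PseudoEMetricSpace X] [MeasurableSpace X] {μ : Measure X}
  [IsProbabilityMeasure μ] {C : ℝ}

theorem transportCost_cond_le (hμ : T1Inequality μ C) (hC : 0 ≤ C) {A : Set X}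
    (hA : MeasurableSet A) (hA0 : μ A ≠ 0) :
    transportCost (fun x y => edist x y) μ[|A] μ ≤
      ENNReal.ofReal √(C * -Real.log (μ A).toReal) := by
  have hlog : 0 ≤ -Real.log (μ A).toReal :=
    neg_nonneg.2 (Real.log_nonpos ENNReal.toReal_nonneg measureReal_le_one)
  refine (hμ _ (cond_isProbabilityMeasure hA0)).trans_eq ?_
  rw [relEntropy_cond μ hA hA0, ← ENNReal.ofReal_mul hC,
    ENNReal.ofReal_rpow_of_nonneg (by positivity) (by norm_num), ← Real.sqrt_eq_rpow]

theorem le_sqrt_add_sqrt [PolishSpace X] [BorelSpace X] (hμ : T1Inequality μ C) (hC : 0 ≤ C)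
    {A B : Set X} (hA : MeasurableSet A) (hB : MeasurableSet B) (hA0 : μ A ≠ 0) (hB0 : μ B ≠ 0)
    {r : ℝ} (hAB : ∀ x ∈ A, ∀ y ∈ B, ENNReal.ofReal r ≤ edist x y) :
    r ≤ √(C * -Real.log (μ A).toReal) + √(C * -Real.log (μ B).toReal) := by
  have := cond_isProbabilityMeasure (μ := μ) hA0
  have : Nonempty X := μ.nonempty_of_neZero
  have hsep : ENNReal.ofReal r ≤ transportCost (fun x y => edist x y) μ[|A] μ[|B] := by
    simpa using transportCost.mul_measure_univ_le_of_ae_mem (ae_cond_mem (μ := μ) hA)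
      (ae_cond_mem (μ := μ) hB) hAB
  have htri := transportCost.triangle measurable_edist edist_triangle μ[|A] μ μ[|B]
  rw [transportCost.comm edist_comm μ] at htri
  rw [← ENNReal.ofReal_le_ofReal_iff (by positivity), ENNReal.ofReal_add (by positivity)
    (by positivity)]
  exact hsep.trans (htri.trans (add_le_add (hμ.transportCost_cond_le hC hA hA0)
    (hμ.transportCost_cond_le hC hB hB0)))

end T1Inequality

theorem sqrt_mul_neg_log_le_sqrt_mul_log_two {C a : ℝ} (hC : 0 ≤ C) (ha : 1 / 2 ≤ a) :
    √(C * -Real.log a) ≤ √(C * Real.log 2) := by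
  have : -Real.log a ≤ Real.log 2 := by
    rw [neg_le, ← Real.log_inv, ← one_div]
    exact Real.log_le_log (by norm_num) ha
  gcongr

theorem le_exp_neg_inv_mul_sq {C b t : ℝ} (hC : 0 < C) (hb : 0 < b) (hb1 : b ≤ 1) (ht : 0 ≤ t)
    (h : t ≤ √(C * -Real.log b)) : b ≤ Real.exp (-C⁻¹ * t ^ 2) := by
  have hsq : t ^ 2 ≤ C * -Real.log b :=
    (Real.le_sqrt ht (mul_nonneg hC.le (neg_nonneg.2 (Real.log_nonpos hb.le hb1)))).1 h
  rw [← Real.log_le_iff_le_exp hb]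
  have : -C⁻¹ * (C * -Real.log b) = Real.log b := by field_simp
  nlinarith [inv_pos.2 hC]

theorem T1Inequality.measure_infEDist_ge_le {X : Type*} [PseudoEMetricSpace X] [PolishSpace X]
    [MeasurableSpace X] [BorelSpace X] {μ : Measure X} [IsProbabilityMeasure μ] {C : ℝ}
    (hμ : T1Inequality μ C) (hC : 0 < C) {A : Set X} (hA : MeasurableSet A) (hA2 : 1 / 2 ≤ μ A)
    {r : ℝ} (hr : √(C * Real.log 2) ≤ r) :
    μ {x | ENNReal.ofReal r ≤ Metric.infEDist x A} ≤
      ENNReal.ofReal (Real.exp (-C⁻¹ * (r - √(C * Real.log 2)) ^ 2)) := by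
  set B := {x | ENNReal.ofReal r ≤ Metric.infEDist x A}
  rcases eq_or_ne (μ B) 0 with hB0 | hB0
  · simp [hB0]
  have hA0 : μ A ≠ 0 := (lt_of_lt_of_le (by norm_num) hA2).ne'
  have hsep := hμ.le_sqrt_add_sqrt hC.le hA
    (measurableSet_le measurable_const Metric.continuous_infEDist.measurable) hA0 hB0
    fun x hx y hy => (edist_comm x y).symm ▸ Metric.le_infEDist.1 hy x hx
  have hA2' : 1 / 2 ≤ (μ A).toReal := by
    simpa using ENNReal.toReal_mono (measure_ne_top μ A) hA2
  have hr₀ := sqrt_mul_neg_log_le_sqrt_mul_log_two hC.le hA2'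
  rw [← ENNReal.ofReal_toReal (measure_ne_top μ B)]
  exact ENNReal.ofReal_le_ofReal <| le_exp_neg_inv_mul_sq hC
    (ENNReal.toReal_pos hB0 (measure_ne_top μ B)) measureReal_le_one (sub_nonneg.2 hr)
    (by linarith)

/-- Marton's argument: if `μ` satisfies `T₁(C)` then `μ` has Gaussian concentration with
constants `r₀ = √(C·log 2)` and rate `C⁻¹`. -/
theorem marton_T1_implies_concentration
    {X : Type*} [MetricSpace X] [PolishSpace X] [MeasurableSpace X] [BorelSpace X]
    (μ : Measure X) [IsProbabilityMeasure μ] (C : ℝ) (hC : 0 < C)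
    (hT1 : ∀ ν : Measure X, IsProbabilityMeasure ν →
      transportCost (fun x y => edist x y) ν μ ≤
        (ENNReal.ofReal C * relEntropy ν μ) ^ (1 / 2 : ℝ)) :
    ∀ A : Set X, MeasurableSet A → 1 / 2 ≤ μ A →
      ∀ r : ℝ, Real.sqrt (C * Real.log 2) ≤ r →
        1 - ENNReal.ofReal (Real.exp (-C⁻¹ * (r - Real.sqrt (C * Real.log 2)) ^ 2)) ≤
          μ {x | ∃ y ∈ A, dist x y ≤ r} := by
  intro A hA hA2 r hr
  set Ar := {x | ∃ y ∈ A, dist x y ≤ r}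
  have hfar : Arᶜ ⊆ {x | ENNReal.ofReal r ≤ Metric.infEDist x A} := fun x hx =>
    Metric.le_infEDist.2 fun y hy => by
      rw [edist_dist]
      exact ENNReal.ofReal_le_ofReal (not_le.1 fun h => hx ⟨y, hy, h⟩).le
  refine tsub_le_iff_right.2 ?_
  calc 1 = μ univ := measure_univ.symm
    _ ≤ μ Ar + μ Arᶜ := measure_univ_le_add_compl Ar
    _ ≤ _ := add_le_add_right ((measure_mono hfar).trans
      (T1Inequality.measure_infEDist_ge_le hT1 hC hA hA2 hr)) _
end
end

section
/- Let (X,ρ) be a Polish metric space and μ a probability measure on X with finite second moment. For n ≥ 1 let Fₙ(x) = W₂(L_n^x, μ) on Xⁿ, where L_n^x = n⁻¹ Σᵢ₌₁ⁿ δ_{xⁱ}. Then for every a ∈ Xⁿ with Fₙ(a) > 0: Σᵢ₌₁ⁿ |∇ᵢ⁻Fₙ|²(a) ≤ 1/n, where |∇ᵢ⁻Fₙ|(a) = limsup_{z→aⁱ} [Fₙ(a¹,…,z,…,aⁿ) − Fₙ(a)]₊ / ρ(z,aⁱ) is the subgradient norm in the i-th coordinate (z replacing aⁱ), with [t]₊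 = max(t,0). -/
open MeasureTheory Filter Set
open scoped ENNReal NNReal Topology Pointwise Classical

noncomputable section

/-!
Disintegrate a near-optimal coupling `π` of `Lₙᵃ` and `μ` along its first coordinate,
`μ = n⁻¹ ∑ⱼ mⱼ` with `mⱼ = π.condKernel (a j)`. Sending the mass `mⱼ` to `bⱼ` instead of `aⱼ`
couples `Lₙᵇ` with `μ`, and `d(bⱼ, y)² ≤ (d(aⱼ, y) + d(bⱼ, aⱼ))²` gives
`W₂²(Lₙᵇ, μ) ≤ W₂²(Lₙᵃ, μ) + ε + n⁻¹ ∑ⱼ (2 d(bⱼ, aⱼ) vⱼ + d(bⱼ, aⱼ)²)` with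
`vⱼ = ∫ d(aⱼ, y) dmⱼ`, while Cauchy–Schwarz gives `n⁻¹ ∑ⱼ vⱼ² ≤ W₂²(Lₙᵃ, μ) + ε`.
Compactness of `[0, ∞]ⁿ` lets `ε → 0`. Moving only the `i`-th point then yields
`|∇ᵢ⁻Fₙ|(a) ≤ vᵢ / (n Fₙ(a))`, and `∑ᵢ vᵢ² / (n Fₙ(a))² ≤ 1 / n`.
-/

theorem limsup_nonneg_of_nonneg {ι : Type*} {l : Filter ι} {u : ι → ℝ} (hu : ∀ i, 0 ≤ u i) :
    0 ≤ limsup u l := by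
  rcases eq_or_neBot l with rfl | hl
  · simp [limsup_eq]
  · exact Real.sInf_nonneg fun b hb => (hu _).trans hb.exists.choose_spec

theorem subGradLen_nonneg {α : Type*} [MetricSpace α] (f : α → ℝ) (x : α) :
    0 ≤ subGradLen f x :=
  limsup_nonneg_of_nonneg fun _ => div_nonneg (le_max_right _ _) dist_nonneg

theorem subGradLen_le_of_sq_le {α : Type*} [MetricSpace α] {f : α → ℝ} {x : α} {c s : ℝ}
    (hc : 0 ≤ c) (hs : 0 < s) (hfx : f x = s)
    (h : ∀ z, f z ^ 2 ≤ s ^ 2 + 2 * c * dist z x + dist z x ^ 2) :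
    subGradLen f x ≤ c / s := by
  rw [subGradLen, hfx]
  rcases eq_or_neBot (𝓝[≠] x) with hbot | hne
  · rw [hbot, limsup_eq]
    simp only [eventually_bot, Set.ofPred_true, Real.sInf_univ]
    positivity
  have hlim : Tendsto (fun z => (c + dist z x / 2) / s) (𝓝[≠] x) (𝓝 (c / s)) := by
    have hd : Tendsto (fun z => dist z x) (𝓝[≠] x) (𝓝 0) :=
      tendsto_nhdsWithin_of_tendsto_nhds
        ((continuous_id.dist continuous_const).tendsto' x 0 (dist_self x))
    simpa using ((hd.div_const 2).const_add c).div_const s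
  have hle : ∀ z, z ≠ x → max (f z - s) 0 / dist x z ≤ (c + dist z x / 2) / s := by
    intro z hz
    have hd : 0 < dist z x := dist_pos.2 hz
    -- `√(s² + w) ≤ s + w / (2s)`, with `w = 2cd + d²`
    have hfz : f z ≤ s + dist z x * ((c + dist z x / 2) / s) := by
      refine (le_abs_self _).trans (abs_le_of_sq_le_sq ((h z).trans ?_) (by positivity))
      field_simp
      nlinarith [sq_nonneg (dist z x * (2 * c + dist z x))]
    rw [dist_comm, div_le_iff₀ hd, mul_comm]
    exact max_le (by linarith) (by positivity)
  calc _ ≤ limsup (fun z => (c + dist z x / 2) / s) (𝓝[≠] x) :=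
        limsup_le_limsup (eventually_nhdsWithin_of_forall hle)
          (isCoboundedUnder_le_of_eventually_le _
            (.of_forall fun _ => div_nonneg (le_max_right _ _) dist_nonneg))
          hlim.isBoundedUnder_le
    _ = c / s := hlim.limsup_eq

theorem exists_prodMk_mem_of_isClosed {α E : Type*} [TopologicalSpace α] [TopologicalSpace E]
    [CompactSpace E] {S : Set (α × E)} (hS : IsClosed S) {l : Filter α} [l.NeBot] {x : α}
    (hl : l ≤ 𝓝 x) (h : ∀ᶠ y in l, ∃ v, (y, v) ∈ S) : ∃ v, (x, v) ∈ S := by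
  obtain ⟨⟨y, v⟩, hv, rfl⟩ : x ∈ Prod.fst '' S :=
    (isClosedMap_fst_of_compactSpace S hS).mem_of_tendsto (tendsto_id'.2 hl)
      (h.mono fun y ⟨v, hv⟩ => ⟨(y, v), hv, rfl⟩)
  exact ⟨v, hv⟩

theorem sq_lintegral_le_lintegral_sq {Ω : Type*} [MeasurableSpace Ω] (ν : Measure Ω)
    [IsProbabilityMeasure ν] {f : Ω → ℝ≥0∞} (hf : AEMeasurable f ν) :
    (∫⁻ ω, f ω ∂ν) ^ 2 ≤ ∫⁻ ω, f ω ^ 2 ∂ν := by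
  have h := ENNReal.lintegral_mul_le_Lp_mul_Lq ν Real.HolderConjugate.two_two hf
    (aemeasurable_const (b := (1 : ℝ≥0∞)))
  simp only [Pi.mul_apply, mul_one, lintegral_const, measure_univ, ENNReal.rpow_two, one_pow,
    ENNReal.one_rpow] at h
  calc (∫⁻ ω, f ω ∂ν) ^ 2 ≤ ((∫⁻ ω, f ω ^ 2 ∂ν) ^ (1 / 2 : ℝ)) ^ 2 := by gcongr
    _ = ∫⁻ ω, f ω ^ 2 ∂ν := by
      rw [← ENNReal.rpow_natCast, ← ENNReal.rpow_mul]; norm_num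

theorem edist_sq_le_add {X : Type*} [PseudoEMetricSpace X] (x x' y : X) :
    edist x' y ^ 2 ≤ edist x y ^ 2 + (2 * edist x' x * edist x y + edist x' x ^ 2) :=
  calc edist x' y ^ 2 ≤ (edist x y + edist x' x) ^ 2 := by
        gcongr; exact (edist_triangle x' x y).trans_eq (add_comm _ _)
    _ = _ := by ring

local notation "T₂" => transportCost (fun x y => edist x y ^ 2)

theorem Wp_two_eq_sqrt {α : Type*} [PseudoEMetricSpace α] [MeasurableSpace α]
    (ν₁ ν₂ : Measure α) : Wp 2 ν₁ ν₂ = √(T₂ ν₁ ν₂).toReal := by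
  simp only [Wp, ENNReal.rpow_two, ← ENNReal.toReal_rpow, Real.sqrt_eq_rpow, one_div]

section Transport

variable {α : Type*} [MeasurableSpace α]

theorem transportCost_le_lintegral (c : α → α → ℝ≥0∞) {ν₁ ν₂ : Measure α}
    {π : Measure (α × α)} (h₁ : π.fst = ν₁) (h₂ : π.snd = ν₂) :
    transportCost c ν₁ ν₂ ≤ ∫⁻ p, c p.1 p.2 ∂π :=
  iInf₂_le π ⟨h₁, h₂⟩

theorem exists_lintegral_lt_transportCost_add {c : α → α → ℝ≥0∞} {ν₁ ν₂ : Measure α}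
    {ε : ℝ≥0∞} (hT : transportCost c ν₁ ν₂ ≠ ⊤) (hε : ε ≠ 0) :
    ∃ π : Measure (α × α), π.fst = ν₁ ∧ π.snd = ν₂ ∧
      ∫⁻ p, c p.1 p.2 ∂π < transportCost c ν₁ ν₂ + ε := by
  have h := ENNReal.lt_add_right hT hε
  simp only [transportCost, iInf_lt_iff] at h
  obtain ⟨π, ⟨h₁, h₂⟩, hπ⟩ := h
  exact ⟨π, h₁, h₂, hπ⟩

variable [MeasurableSingletonClass α] {n : ℕ}

theorem lintegral_empMeasure (a : Fin n → α) (f : α → ℝ≥0∞) :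
    ∫⁻ x, f x ∂empMeasure a = (n : ℝ≥0∞)⁻¹ * ∑ j, f (a j) := by
  simp [empMeasure, lintegral_finsetSum_measure]

instance instIsFiniteMeasureEmpMeasure (a : Fin n → α) : IsFiniteMeasure (empMeasure a) where
  measure_univ_lt_top := by simp [empMeasure, lt_top_iff_ne_top]

theorem transportCost_empMeasure_le (c : α → α → ℝ≥0∞) (b : Fin n → α)
    (m : Fin n → Measure α) [∀ j, IsProbabilityMeasure (m j)] :
    transportCost c (empMeasure b) ((n : ℝ≥0∞)⁻¹ • ∑ j, m j) ≤
      (n : ℝ≥0∞)⁻¹ * ∑ j, ∫⁻ y, c (b j) y ∂m j := by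
  let π : Measure (α × α) := (n : ℝ≥0∞)⁻¹ • ∑ j, (Measure.dirac (b j)).prod (m j)
  calc _ ≤ ∫⁻ p, c p.1 p.2 ∂π := transportCost_le_lintegral c ?_ ?_
    _ = _ := by
      simp [π, lintegral_finsetSum_measure, Measure.dirac_prod,
        (measurableEmbedding_prodMk_left _).lintegral_map]
  · ext s hs
    simp [π, empMeasure, Measure.fst_apply hs, ← prod_univ, Measure.prod_prod]
  · ext s hs
    simp [π, Measure.snd_apply hs, ← univ_prod, Measure.prod_prod]

variable {β : Type*} [MeasurableSpace β] [StandardBorelSpace β] [Nonempty β] {a : Fin n → α}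
  {π : Measure (α × β)} [IsFiniteMeasure π]

theorem lintegral_eq_sum_condKernel (hπ : π.fst = empMeasure a) {f : α × β → ℝ≥0∞}
    (hf : Measurable f) :
    ∫⁻ p, f p ∂π = (n : ℝ≥0∞)⁻¹ * ∑ j, ∫⁻ y, f (a j, y) ∂π.condKernel (a j) := by
  conv_lhs => rw [← π.disintegrate π.condKernel, hπ]
  rw [Measure.lintegral_compProd hf, lintegral_empMeasure]

theorem snd_eq_sum_condKernel (hπ : π.fst = empMeasure a) :
    π.snd = (n : ℝ≥0∞)⁻¹ • ∑ j, π.condKernel (a j) := by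
  ext s hs
  rw [Measure.snd_apply hs, ← lintegral_indicator_one (measurable_snd hs),
    lintegral_eq_sum_condKernel hπ (measurable_one.indicator (measurable_snd hs)),
    ← lintegral_indicator_one hs, lintegral_smul_measure, lintegral_finsetSum_measure]
  rfl

end Transport

section Quadratic

variable {X : Type*} [MetricSpace X] [MeasurableSpace X] [BorelSpace X]

theorem lintegral_edist_sq_le (ν : Measure X) [IsProbabilityMeasure ν] (x x' : X) :
    ∫⁻ y, edist x' y ^ 2 ∂ν ≤
      ∫⁻ y, edist x y ^ 2 ∂ν + (2 * edist x' x * ∫⁻ y, edist x y ∂ν + edist x' x ^ 2) := by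
  calc _ ≤ ∫⁻ y, edist x y ^ 2 + (2 * edist x' x * edist x y + edist x' x ^ 2) ∂ν :=
        lintegral_mono fun y => edist_sq_le_add x x' y
    _ = _ := by
      rw [lintegral_add_left (measurable_edist_right.pow_const 2),
        lintegral_add_right _ measurable_const, lintegral_const_mul _ measurable_edist_right,
        lintegral_const, measure_univ, mul_one]

variable [PolishSpace X] [Nonempty X] {n : ℕ}

section Coupling

variable {a : Fin n → X} {π : Measure (X × X)} [IsFiniteMeasure π]

theorem transportCost_empMeasure_snd_le (hπ : π.fst = empMeasure a) (b : Fin n → X) :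
    T₂ (empMeasure b) π.snd ≤ ∫⁻ p, edist p.1 p.2 ^ 2 ∂π + (n : ℝ≥0∞)⁻¹ *
      ∑ j, (2 * edist (b j) (a j) * ∫⁻ y, edist (a j) y ∂π.condKernel (a j) +
        edist (b j) (a j) ^ 2) := by
  rw [snd_eq_sum_condKernel hπ,
    lintegral_eq_sum_condKernel hπ (continuous_edist.measurable.pow_const 2)]
  calc _ ≤ (n : ℝ≥0∞)⁻¹ * ∑ j, ∫⁻ y, edist (b j) y ^ 2 ∂π.condKernel (a j) :=
        transportCost_empMeasure_le _ b _
    _ ≤ (n : ℝ≥0∞)⁻¹ * ∑ j, (∫⁻ y, edist (a j) y ^ 2 ∂π.condKernel (a j) +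
          (2 * edist (b j) (a j) * ∫⁻ y, edist (a j) y ∂π.condKernel (a j) +
            edist (b j) (a j) ^ 2)) := by
        gcongr with j
        exact lintegral_edist_sq_le _ _ _
    _ = _ := by rw [Finset.sum_add_distrib, mul_add]

theorem sum_sq_lintegral_edist_condKernel_le (hπ : π.fst = empMeasure a) :
    (n : ℝ≥0∞)⁻¹ * ∑ j, (∫⁻ y, edist (a j) y ∂π.condKernel (a j)) ^ 2 ≤
      ∫⁻ p, edist p.1 p.2 ^ 2 ∂π := by
  rw [lintegral_eq_sum_condKernel hπ (continuous_edist.measurable.pow_const 2)]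
  gcongr with j
  exact sq_lintegral_le_lintegral_sq _ measurable_edist_right.aemeasurable

end Coupling

theorem exists_transportCost_empMeasure_le (hn : n ≠ 0) (a : Fin n → X) (μ : Measure X) :
    ∃ v : Fin n → ℝ≥0∞, (n : ℝ≥0∞)⁻¹ * ∑ j, v j ^ 2 ≤ T₂ (empMeasure a) μ ∧
      ∀ b : Fin n → X, T₂ (empMeasure b) μ ≤ T₂ (empMeasure a) μ + (n : ℝ≥0∞)⁻¹ *
        ∑ j, (2 * edist (b j) (a j) * v j + edist (b j) (a j) ^ 2) := by
  set T := T₂ (empMeasure a) μ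
  rcases eq_or_ne T ⊤ with hT | hT
  · exact ⟨0, by simp [hT], fun b => by simp [hT]⟩
  have hn' : (n : ℝ≥0∞)⁻¹ ≠ ⊤ := ENNReal.inv_ne_top.2 (Nat.cast_ne_zero.2 hn)
  let S : Set (ℝ≥0∞ × (Fin n → ℝ≥0∞)) := {p | (n : ℝ≥0∞)⁻¹ * ∑ j, p.2 j ^ 2 ≤ T + p.1} ∩
    ⋂ b : Fin n → X, {p | T₂ (empMeasure b) μ ≤ T + p.1 + (n : ℝ≥0∞)⁻¹ *
      ∑ j, (2 * edist (b j) (a j) * p.2 j + edist (b j) (a j) ^ 2)}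
  have hS : IsClosed S := by
    refine (isClosed_le ?_ ?_).inter (isClosed_iInter fun b => isClosed_le ?_ ?_)
    · exact (ENNReal.continuous_const_mul hn').comp
        (continuous_finsetSum _ fun j _ => (ENNReal.continuous_pow 2).comp
          ((continuous_apply j).comp continuous_snd))
    · exact continuous_const.add continuous_fst
    · exact continuous_const
    · refine (continuous_const.add continuous_fst).add ((ENNReal.continuous_const_mul hn').comp
        (continuous_finsetSum _ fun j _ => ?_))
      exact ((ENNReal.continuous_const_mul (by finiteness)).comp
        ((continuous_apply j).comp continuous_snd)).add continuous_const
  have hε : ∀ᶠ ε in 𝓝[>] 0, ∃ v, (ε, v) ∈ S := by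
    filter_upwards [self_mem_nhdsWithin] with ε (hε : 0 < ε)
    obtain ⟨π, h₁, h₂, hπ⟩ := exists_lintegral_lt_transportCost_add hT hε.ne'
    have : IsFiniteMeasure π := ⟨by rw [← Measure.fst_univ, h₁]; exact measure_lt_top _ _⟩
    refine ⟨fun j => ∫⁻ y, edist (a j) y ∂π.condKernel (a j),
      (sum_sq_lintegral_edist_condKernel_le h₁).trans hπ.le, mem_iInter.2 fun b => ?_⟩
    rw [mem_ofPred_eq, ← h₂]
    exact (transportCost_empMeasure_snd_le h₁ b).trans (by gcongr)
  obtain ⟨v, hv⟩ := exists_prodMk_mem_of_isClosed hS nhdsWithin_le_nhds hε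
  simp only [S, mem_inter_iff, mem_iInter, mem_ofPred_eq, add_zero] at hv
  exact ⟨v, hv⟩

end Quadratic

theorem sq_Wp_two_update_le {X : Type*} [MetricSpace X] [MeasurableSpace X] {n : ℕ}
    (hn : 1 ≤ n) {a : Fin n → X} {μ : Measure X} {v : Fin n → ℝ≥0∞}
    (hT : T₂ (empMeasure a) μ ≠ ⊤)
    (hv : ∀ b : Fin n → X, T₂ (empMeasure b) μ ≤ T₂ (empMeasure a) μ + (n : ℝ≥0∞)⁻¹ *
        ∑ j, (2 * edist (b j) (a j) * v j + edist (b j) (a j) ^ 2))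
    {i : Fin n} (hvi : v i ≠ ⊤) (z : X) :
    Wp 2 (empMeasure (Function.update a i z)) μ ^ 2 ≤
      Wp 2 (empMeasure a) μ ^ 2 + 2 * ((v i).toReal / n) * dist z (a i) + dist z (a i) ^ 2 := by
  have hz := hv (Function.update a i z)
  rw [Finset.sum_eq_single i (fun j _ hj => by simp [Function.update_of_ne hj]) (by simp)] at hz
  simp only [Function.update_self] at hz
  have hn' : (n : ℝ≥0∞)⁻¹ ≠ ⊤ := by simpa using Nat.one_le_iff_ne_zero.1 hn
  rw [Wp_two_eq_sqrt, Wp_two_eq_sqrt, Real.sq_sqrt ENNReal.toReal_nonneg,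
    Real.sq_sqrt ENNReal.toReal_nonneg]
  refine (ENNReal.toReal_mono (by finiteness) hz).trans ?_
  rw [ENNReal.toReal_add hT (by finiteness), ENNReal.toReal_mul,
    ENNReal.toReal_add (by finiteness) (by finiteness)]
  simp only [ENNReal.toReal_inv, ENNReal.toReal_natCast, ENNReal.toReal_mul,
    ENNReal.toReal_ofNat, ENNReal.toReal_pow, ← dist_edist]
  have hd : (n : ℝ)⁻¹ * dist z (a i) ^ 2 ≤ dist z (a i) ^ 2 :=
    mul_le_of_le_one_left (sq_nonneg _) (inv_le_one_of_one_le₀ (by exact_mod_cast hn))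
  linarith [show (n : ℝ)⁻¹ * (2 * dist z (a i) * (v i).toReal + dist z (a i) ^ 2) =
    2 * ((v i).toReal / n) * dist z (a i) + (n : ℝ)⁻¹ * dist z (a i) ^ 2 by ring]

theorem subgradient_sum_le_general
    {X : Type*} [MetricSpace X] [PolishSpace X] [MeasurableSpace X] [BorelSpace X]
    (μ : Measure X)
    (n : ℕ) (hn : 1 ≤ n) (a : Fin n → X)
    (hpos : 0 < Wp 2 (empMeasure a) μ) :
    ∑ i, (subGradLen (fun z => Wp 2 (empMeasure (Function.update a i z)) μ) (a i)) ^ 2 ≤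
      1 / (n : ℝ) := by
  have : Nonempty X := ⟨a ⟨0, hn⟩⟩
  obtain ⟨v, hv_sum, hv⟩ := exists_transportCost_empMeasure_le (by omega) a μ
  set T := T₂ (empMeasure a) μ
  set s := Wp 2 (empMeasure a) μ
  have hs : s = √T.toReal := Wp_two_eq_sqrt _ _
  have hT : T ≠ ⊤ := fun h => by simp [hs, h] at hpos
  have ht : 0 < T.toReal := Real.sqrt_pos.1 (hs ▸ hpos)
  have hv_top : ∀ j, v j ≠ ⊤ := fun j hj => hT <| top_le_iff.1 <| hv_sum.trans' <|
    (ENNReal.mul_eq_top.2 <| .inl ⟨by simp, ENNReal.sum_eq_top.2 ⟨j, by simp, by simp [hj]⟩⟩).ge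
  have hv_sum' : ∑ j, (v j).toReal ^ 2 ≤ n * T.toReal := by
    have := ENNReal.toReal_mono hT hv_sum
    simp only [ENNReal.toReal_mul, ENNReal.toReal_inv, ENNReal.toReal_natCast,
      ENNReal.toReal_sum fun j _ => ENNReal.pow_ne_top (hv_top j), ENNReal.toReal_pow] at this
    rwa [inv_mul_le_iff₀ (by positivity)] at this
  calc _ ≤ ∑ i, ((v i).toReal / n / s) ^ 2 := by
        gcongr with i
        · exact subGradLen_nonneg _ _
        · exact subGradLen_le_of_sq_le (by positivity) hpos (by simp [s])
            (sq_Wp_two_update_le hn hT hv (hv_top i))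
    _ = (∑ i, (v i).toReal ^ 2) / (n ^ 2 * T.toReal) := by
        rw [Finset.sum_div]
        refine Finset.sum_congr rfl fun i _ => ?_
        rw [hs, div_div, div_pow, mul_pow, Real.sq_sqrt ENNReal.toReal_nonneg]
    _ ≤ 1 / n := by
        rw [div_le_div_iff₀ (by positivity) (by positivity)]
        nlinarith

/-- The sum of the squared coordinatewise subgradient norms of `Fₙ = W₂(Lₙ^·,μ)` is at most
`1/n` wherever `Fₙ > 0`. -/
theorem subgradient_sum_le
    {X : Type*} [MetricSpace X] [PolishSpace X] [MeasurableSpace X] [BorelSpace X]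
    (μ : Measure X) [IsProbabilityMeasure μ]
    (hmom : ∃ x₀ : X, ∫⁻ x, edist x₀ x ^ (2 : ℝ) ∂μ < ∞)
    (n : ℕ) (hn : 1 ≤ n) (a : Fin n → X)
    (hpos : 0 < Wp 2 (empMeasure a) μ) :
    ∑ i, (subGradLen (fun z => Wp 2 (empMeasure (Function.update a i z)) μ) (a i)) ^ 2 ≤
      1 / (n : ℝ) :=
  subgradient_sum_le_general μ n hn a hpos
end
end

section
/- Let μ be a probability measure on ℝ^d satisfying T_SG(ν,μ) ≤ C₂·H(ν|μ) for every probability measure ν on ℝ^d and some constant C₂ > 0. Then μ satisfies the Poincaré inequality with constant C₂/2, i.e. Var_μ(f) ≤ (C₂/2) ∫ |∇f|₂² dμ for every smooth compactly supported function f: ℝ^d → ℝ. -/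
open MeasureTheory Filter Set
open scoped ENNReal NNReal Topology Pointwise Classical

noncomputable section


lemma log_le_cubic {x : ℝ} (hx : 0 < x) :
    Real.log x ≤ (x-1) - (x-1)^2/2 + (x-1)^3/3 := by
  set r : ℝ → ℝ := fun y => (y-1) - (y-1)^2/2 + (y-1)^3/3 - Real.log y with hrdef
  have key : ∀ y : ℝ, 0 < y → HasDerivAt r ((y-1)^3 / y) y := by
    intro y hy
    have hid : HasDerivAt (fun z : ℝ => z - 1) 1 y := (hasDerivAt_id y).sub_const 1
    have h1 : HasDerivAt (fun z : ℝ => (z-1) - (z-1)^2/2 + (z-1)^3/3)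
        (1 - (2*(y-1)^1*1)/2 + (3*(y-1)^2*1)/3) y :=
      ((hid.sub ((hid.pow 2).div_const 2)).add ((hid.pow 3).div_const 3))
    have h2 : HasDerivAt Real.log y⁻¹ y := Real.hasDerivAt_log hy.ne'
    have h3 := h1.sub h2
    refine HasDerivAt.congr_deriv h3 ?_
    field_simp
    ring
  have hr1 : r 1 = 0 := by simp [hrdef]
  have hnn : 0 ≤ r x := by
    rcases le_total 1 x with hx1 | hx1
    · have hmono : MonotoneOn r (Ici (1:ℝ)) := by
        apply monotoneOn_of_deriv_nonneg (convex_Ici 1)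
        · exact ContinuousOn.mono (s := Ioi 0) (fun y hy => ((key y hy).continuousAt).continuousWithinAt)
            (fun y hy => mem_Ioi.2 (lt_of_lt_of_le one_pos (mem_Ici.1 hy)))
        · intro y hy
          rw [interior_Ici] at hy
          exact ((key y (lt_trans one_pos hy)).differentiableAt).differentiableWithinAt
        · intro y hy
          rw [interior_Ici] at hy
          have hy' : 1 < y := hy
          rw [(key y (lt_trans one_pos hy')).deriv]
          exact div_nonneg (pow_nonneg (by linarith) 3) (by linarith)
      have := hmono (mem_Ici.2 le_rfl) (mem_Ici.2 hx1) hx1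
      rw [hr1] at this; exact this
    · have hanti : AntitoneOn r (Ioc (0:ℝ) 1) := by
        apply antitoneOn_of_deriv_nonpos (convex_Ioc 0 1)
        · exact ContinuousOn.mono (fun y hy => ((key y hy).continuousAt).continuousWithinAt)
            (fun y hy => hy.1)
        · intro y hy
          rw [interior_Ioc] at hy
          exact ((key y hy.1).differentiableAt).differentiableWithinAt
        · intro y hy
          rw [interior_Ioc] at hy
          rw [(key y hy.1).deriv]
          apply div_nonpos_of_nonpos_of_nonneg _ hy.1.le
          have h1 : y - 1 ≤ 0 := by linarith [hy.2]
          exact Odd.pow_nonpos ⟨1, by norm_num⟩ h1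
      have := hanti (mem_Ioc.2 ⟨hx, hx1⟩) (mem_Ioc.2 ⟨one_pos, le_rfl⟩) hx1
      rw [hr1] at this; exact this
  simp only [hrdef] at hnn
  linarith

lemma mul_log_le {u : ℝ} (hu : |u| ≤ 1/2) :
    (1+u) * Real.log (1+u) ≤ u + u^2/2 + |u|^3 := by
  have hu' := abs_le.1 hu
  have hx : 0 < 1 + u := by linarith [hu'.1]
  have h := log_le_cubic hx
  have h2 : (1+u) * Real.log (1+u) ≤ (1+u) * ((1+u-1) - (1+u-1)^2/2 + (1+u-1)^3/3) :=
    mul_le_mul_of_nonneg_left h hx.le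
  rcases abs_cases u with ⟨he, _⟩ | ⟨he, _⟩ <;> rw [he] <;> nlinarith [sq_nonneg u, sq_nonneg (u*u), hu'.1, hu'.2]

lemma integrable_of_bounded {α : Type*} [MeasurableSpace α] [TopologicalSpace α]
    [OpensMeasurableSpace α] {μ : Measure α} [IsFiniteMeasure μ] {g : α → ℝ}
    (hg : Continuous g) {C : ℝ} (h : ∀ x, |g x| ≤ C) : Integrable g μ :=
  (integrable_const C).mono' hg.aestronglyMeasurable (ae_of_all _ fun x => by
    simpa using h x)


lemma key_pointwise {s CL M a dd fxy c : ℝ} (hs : 0 < s) (hsL : s*CL ≤ 1)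
    (hcdef : c = 1 - s*M) (hcpos : 0 < c) (hd0 : 0 ≤ dd) (ha0 : 0 ≤ a)
    (hlip : fxy ≤ CL*dd) (htay : fxy ≤ a*dd + M*dd^2) :
    s*fxy - s^2*a^2/(4*c) ≤ min (dd^2) dd := by
  have hq : 0 ≤ s^2*a^2/(4*c) := by positivity
  rcases le_or_gt 1 dd with hd1 | hd1
  · rw [min_eq_right (by nlinarith : dd ≤ dd^2)]
    have h1 : s*fxy ≤ s*(CL*dd) := mul_le_mul_of_nonneg_left hlip hs.le
    have h2 : s*CL*dd ≤ 1*dd := mul_le_mul_of_nonneg_right hsL hd0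
    nlinarith
  · rw [min_eq_left (by nlinarith : dd^2 ≤ dd)]
    have h1 : s*fxy ≤ s*(a*dd + M*dd^2) := mul_le_mul_of_nonneg_left htay hs.le
    have h1' : s*fxy ≤ s*a*dd + s*M*dd^2 := by
      have e : s*(a*dd + M*dd^2) = s*a*dd + s*M*dd^2 := by ring
      linarith
    have h2 : s*a*dd - c*dd^2 ≤ s^2*a^2/(4*c) := by
      rw [le_div_iff₀ (by positivity : (0:ℝ) < 4*c)]
      nlinarith [sq_nonneg (s*a - 2*c*dd)]
    have hq2 : c*dd^2 = dd^2 - s*M*dd^2 := by rw [hcdef]; ring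
    linarith

lemma abs_cube_le {a B : ℝ} (h : |a| ≤ B) : |a|^3 ≤ B * a^2 := by
  have e : |a|^3 = |a| * a^2 := by rw [← sq_abs]; ring
  rw [e]
  exact mul_le_mul_of_nonneg_right h (sq_nonneg a)



set_option maxHeartbeats 2000000 in
/-- The transportation cost inequality for the cost `α₁(|x−y|₂)` with constant `C₂` implies the
Poincaré inequality with constant `C₂/2`. -/
theorem TSG_implies_poincare
    {d : ℕ} (μ : Measure (EuclideanSpace ℝ (Fin d))) [IsProbabilityMeasure μ]
    (C₂ : ℝ) (hC₂ : 0 < C₂)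
    (hT : ∀ ν : Measure (EuclideanSpace ℝ (Fin d)), IsProbabilityMeasure ν →
      transportCost (fun x y => ENNReal.ofReal (min (dist x y ^ 2) (dist x y))) ν μ ≤
        ENNReal.ofReal C₂ * relEntropy ν μ) :
    ∀ f : EuclideanSpace ℝ (Fin d) → ℝ, ContDiff ℝ (⊤ : ℕ∞) f → HasCompactSupport f →
      ∫ x, f x ^ 2 ∂μ - (∫ x, f x ∂μ) ^ 2 ≤ (C₂ / 2) * ∫ x, ‖fderiv ℝ f x‖ ^ 2 ∂μ := by
  intro f hf hfc
  have hfcont : Continuous f := hf.continuous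
  set m : ℝ := ∫ x, f x ∂μ with hm
  set f' : EuclideanSpace ℝ (Fin d) → (EuclideanSpace ℝ (Fin d) →L[ℝ] ℝ) := fderiv ℝ f with hf'
  have hf'cont : Continuous f' := hf.continuous_fderiv (by simp)
  have hfdiff : Differentiable ℝ f := hf.differentiable (by simp)
  -- bound on |f - m|
  obtain ⟨Cf, hCf⟩ := hfc.exists_bound_of_continuous hfcont
  set B : ℝ := Cf + |m| + 1 with hBdef
  have hB : ∀ x, |f x - m| ≤ B := by
    intro x
    have := hCf x
    rw [Real.norm_eq_abs] at this
    calc |f x - m| ≤ |f x| + |m| := abs_sub _ _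
      _ ≤ B := by simp only [hBdef]; linarith
  have hB0 : 0 < B := by
    have h0 := hCf 0
    rw [Real.norm_eq_abs] at h0
    have hcf0 : (0:ℝ) ≤ Cf := le_trans (abs_nonneg _) h0
    simp only [hBdef]; positivity
  -- Lipschitz bound on f via bound on f'
  obtain ⟨CL, hCL⟩ := (hfc.fderiv ℝ).exists_bound_of_continuous hf'cont
  have hCL0 : 0 ≤ CL := le_trans (norm_nonneg _) (hCL 0)
  have hflip : ∀ x y : EuclideanSpace ℝ (Fin d), f x - f y ≤ CL * dist x y := by
    intro x y
    have := convex_univ.norm_image_sub_le_of_norm_fderiv_le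
      (fun z _ => hfdiff z) (fun z _ => hCL z) (mem_univ y) (mem_univ x)
    rw [Real.norm_eq_abs] at this
    rw [dist_eq_norm]
    exact le_trans (le_trans (le_abs_self _) this) le_rfl
  -- Lipschitz constant of f'
  obtain ⟨M, hM⟩ : ∃ M : ℝ≥0, LipschitzWith M f' :=
    ContDiff.lipschitzWith_of_hasCompactSupport (hfc.fderiv ℝ)
      (hf.fderiv_right (m := 1) (WithTop.coe_le_coe.2 le_top)) one_ne_zero
  -- Taylor bound
  have taylor : ∀ x y : EuclideanSpace ℝ (Fin d), f x - f y ≤ ‖f' x‖ * dist x y + M * dist x y ^ 2 := by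
    intro x y
    have hb : ∀ z ∈ Metric.closedBall x ‖y - x‖, ‖f' z - f' x‖ ≤ (M : ℝ) * ‖y - x‖ := by
      intro z hz
      have := hM.dist_le_mul z x
      rw [dist_eq_norm, dist_eq_norm] at this
      exact le_trans this (mul_le_mul_of_nonneg_left hz M.2)
    have hball := convex_closedBall x ‖y - x‖
    have hymem : y ∈ Metric.closedBall x ‖y - x‖ := by
      rw [Metric.mem_closedBall, dist_eq_norm]
    have key := hball.norm_image_sub_le_of_norm_fderiv_le' (fun z _ => hfdiff z) hb
      (Metric.mem_closedBall_self (norm_nonneg _)) hymem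
    -- key : ‖f y - f x - (f' x) (y - x)‖ ≤ M * ‖y - x‖ * ‖y - x‖
    have h1 : f x - f y + (f' x) (y - x) ≤ M * ‖y - x‖ * ‖y - x‖ := by
      have := neg_abs_le (f y - f x - (f' x) (y - x))
      rw [Real.norm_eq_abs] at key
      linarith [key, neg_abs_le (f y - f x - (f' x) (y - x)), le_abs_self (f y - f x - (f' x) (y - x))]
    have h2 : -(f' x) (y - x) ≤ ‖f' x‖ * ‖y - x‖ := by
      have := (f' x).le_opNorm (y - x)
      rw [Real.norm_eq_abs] at this
      linarith [neg_abs_le ((f' x) (y - x)), le_abs_self ((f' x) (y - x))]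
    rw [dist_eq_norm, norm_sub_rev x y]
    nlinarith [norm_nonneg (y - x)]
  -- variance and energy
  set V : ℝ := ∫ x, (f x - m)^2 ∂μ with hV
  set G : ℝ := ∫ x, ‖f' x‖^2 ∂μ with hG
  have hfm_cont : Continuous fun x : EuclideanSpace ℝ (Fin d) => f x - m := hfcont.sub continuous_const
  have hfm_int : Integrable (fun x : EuclideanSpace ℝ (Fin d) => f x - m) μ := integrable_of_bounded hfm_cont hB
  have hf_int : Integrable f μ := hfcont.integrable_of_hasCompactSupport hfc
  have hfm2_cont : Continuous fun x : EuclideanSpace ℝ (Fin d) => (f x - m)^2 := hfm_cont.pow 2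
  have hfm2_bd : ∀ x, |(f x - m)^2| ≤ B^2 := by
    intro x
    rw [abs_of_nonneg (sq_nonneg _)]
    calc (f x - m)^2 = |f x - m|^2 := (sq_abs _).symm
      _ ≤ B^2 := pow_le_pow_left₀ (abs_nonneg _) (hB x) 2
  have hfm2_int : Integrable (fun x : EuclideanSpace ℝ (Fin d) => (f x - m)^2) μ := integrable_of_bounded hfm2_cont hfm2_bd
  have hg2_cont : Continuous fun x : EuclideanSpace ℝ (Fin d) => ‖f' x‖^2 := (hf'cont.norm.pow 2)
  have hg2_bd : ∀ x, |‖f' x‖^2| ≤ CL^2 := by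
    intro x
    rw [abs_of_nonneg (sq_nonneg _)]
    exact pow_le_pow_left₀ (norm_nonneg _) (hCL x) 2
  have hg2_int : Integrable (fun x : EuclideanSpace ℝ (Fin d) => ‖f' x‖^2) μ := integrable_of_bounded hg2_cont hg2_bd
  have hV0 : 0 ≤ V := integral_nonneg fun x => sq_nonneg _
  have hG0 : 0 ≤ G := integral_nonneg fun x => sq_nonneg _
  have hmean : ∫ x, (f x - m) ∂μ = 0 := by
    rw [integral_sub hf_int (integrable_const m), integral_const]
    simp [hm]
  -- the goal equals V ≤ C₂/2 * G
  have hf2_bd : ∀ x, |f x ^ 2| ≤ Cf^2 := fun x => by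
    have h0 := hCf x
    rw [Real.norm_eq_abs] at h0
    rw [abs_of_nonneg (sq_nonneg _), ← sq_abs]
    exact pow_le_pow_left₀ (abs_nonneg _) h0 2
  have hf2int : Integrable (fun x : EuclideanSpace ℝ (Fin d) => f x ^ 2) μ :=
    integrable_of_bounded (hfcont.pow 2) hf2_bd
  have hgoal_eq : ∫ x, f x ^ 2 ∂μ - m^2 = V := by
    have expand : (fun x : EuclideanSpace ℝ (Fin d) => (f x - m)^2)
        = fun x => (f x ^2 - (2*m) * f x) + m^2 := by
      funext x; ring
    have hsub : Integrable (fun x : EuclideanSpace ℝ (Fin d) => f x ^2 - (2*m) * f x) μ :=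
      hf2int.sub (hf_int.const_mul (2*m))
    rw [hV, expand, integral_add hsub (integrable_const _),
        integral_sub hf2int (hf_int.const_mul (2*m)), integral_const_mul, integral_const]
    simp only [measure_univ, probReal_univ, ENNReal.toReal_one, smul_eq_mul, one_mul, ← hm]
    ring
  rw [hgoal_eq]
  have hM0 : (0:ℝ) ≤ M := M.2
  have key : ∀ l : ℝ, 0 < l → l * V - l^2 * G / 4 ≤ C₂ * V / 2 := by
    intro l hl
    set ε₀ : ℝ := min (1/(2*B)) (min (1/(l*(CL+1))) (1/(2*l*(M+1)))) with hε₀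
    have hε₀pos : 0 < ε₀ := by
      apply lt_min (by positivity) (lt_min (by positivity) (by positivity))
    have main : ∀ ε : ℝ, ε ∈ Ioo 0 ε₀ →
        l*V - l^2*(1+ε*B)*G/(4*(1-l*ε*M)) ≤ C₂*(V/2 + ε*B*V) := by
      intro ε hε
      obtain ⟨hεpos, hεlt⟩ := hε
      have hε1 : ε ≤ 1/(2*B) := le_trans hεlt.le (min_le_left _ _)
      have hε2 : ε ≤ 1/(l*(CL+1)) :=
        le_trans hεlt.le (le_trans (min_le_right _ _) (min_le_left _ _))
      have hε3 : ε ≤ 1/(2*l*(M+1)) :=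
        le_trans hεlt.le (le_trans (min_le_right _ _) (min_le_right _ _))
      have hεB : ε * B ≤ 1/2 := by
        calc ε * B ≤ (1/(2*B)) * B := mul_le_mul_of_nonneg_right hε1 hB0.le
          _ = 1/2 := by field_simp [hB0.ne']
      set s : ℝ := l * ε with hs_def
      clear_value s
      have hs : 0 < s := by rw [hs_def]; exact mul_pos hl hεpos
      have hsL : s * CL ≤ 1 := by
        rw [hs_def]
        calc (l*ε) * CL ≤ (l * (1/(l*(CL+1)))) * CL := by
              apply mul_le_mul_of_nonneg_right _ hCL0
              exact mul_le_mul_of_nonneg_left hε2 hl.le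
          _ = CL/(CL+1) := by field_simp [hl.ne']
          _ ≤ 1 := by rw [div_le_one (by linarith)]; linarith
      have hsM : s * M ≤ 1/2 := by
        rw [hs_def]
        calc (l*ε) * (M:ℝ) ≤ (l * (1/(2*l*(M+1)))) * M := by
              apply mul_le_mul_of_nonneg_right _ hM0
              exact mul_le_mul_of_nonneg_left hε3 hl.le
          _ = M/(2*(M+1)) := by field_simp [hl.ne']
          _ ≤ 1/2 := by
              rw [div_le_div_iff₀ (by linarith) (by norm_num)]
              linarith
      set c : ℝ := 1 - s * M with hc_def
      clear_value c
      have hcpos : (0:ℝ) < c := by rw [hc_def]; linarith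
      -- the tilted density
      set dens : EuclideanSpace ℝ (Fin d) → ℝ := fun x => 1 + ε * (f x - m) with hdens_def
      clear_value dens
      have habs : ∀ x, |ε * (f x - m)| ≤ 1/2 := by
        intro x
        rw [abs_mul, abs_of_nonneg hεpos.le]
        calc ε * |f x - m| ≤ ε * B := mul_le_mul_of_nonneg_left (hB x) hεpos.le
          _ ≤ 1/2 := hεB
      have hdens_lb : ∀ x, 1/2 ≤ dens x := by
        intro x
        have := (abs_le.1 (habs x)).1
        simp only [hdens_def]; linarith
      have hdens_ub2 : ∀ x, dens x ≤ 3/2 := by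
        intro x
        have := (abs_le.1 (habs x)).2
        simp only [hdens_def]; linarith
      have hdens_ub : ∀ x, dens x ≤ 1 + ε * B := by
        intro x
        have h1 : ε * (f x - m) ≤ ε * B := by
          have := (abs_le.1 (hB x)).2
          exact mul_le_mul_of_nonneg_left this hεpos.le
        simp only [hdens_def]; linarith
      have hdens_pos : ∀ x, 0 < dens x := fun x => lt_of_lt_of_le one_half_pos (hdens_lb x)
      have hdens_cont : Continuous dens := by
        simp only [hdens_def]; fun_prop
      have hdens_bd : ∀ x, |dens x| ≤ 3/2 := fun x => by
        rw [abs_of_pos (hdens_pos x)]; exact hdens_ub2 x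
      have hdens_int : Integrable dens μ := integrable_of_bounded hdens_cont hdens_bd
      set w : EuclideanSpace ℝ (Fin d) → ℝ≥0 := fun x => (dens x).toNNReal with hw_def
      have hw_cont : Continuous w := continuous_real_toNNReal.comp hdens_cont
      have hw_meas : Measurable w := hw_cont.measurable
      have hw_coe : ∀ x, ((w x : ℝ≥0) : ℝ≥0∞) = ENNReal.ofReal (dens x) := fun _ => rfl
      clear_value w
      set ν : Measure (EuclideanSpace ℝ (Fin d)) :=
        μ.withDensity (fun x => ((w x : ℝ≥0) : ℝ≥0∞)) with hν_def
      clear_value ν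
      have hdens_mean : ∫ x, dens x ∂μ = 1 := by
        simp only [hdens_def]
        rw [integral_add (integrable_const 1) (hfm_int.const_mul ε), integral_const,
          integral_const_mul, hmean]
        simp
      have hν_univ : ν univ = 1 := by
        rw [hν_def, withDensity_apply _ MeasurableSet.univ, setLIntegral_univ]
        have h1 : ∫⁻ x, ((w x : ℝ≥0) : ℝ≥0∞) ∂μ = ∫⁻ x, ENNReal.ofReal (dens x) ∂μ :=
          lintegral_congr fun x => hw_coe x
        rw [h1, ← ofReal_integral_eq_lintegral_ofReal hdens_int
          (ae_of_all _ fun x => (hdens_pos x).le), hdens_mean]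
        norm_num
      haveI hν_prob : IsProbabilityMeasure ν := ⟨hν_univ⟩
      have hν_ac : ν ≪ μ := by
        rw [hν_def]; exact withDensity_absolutelyContinuous μ _
      have hν_int_eq : ∀ g : EuclideanSpace ℝ (Fin d) → ℝ,
          ∫ x, g x ∂ν = ∫ x, dens x * g x ∂μ := by
        intro g
        rw [hν_def, integral_withDensity_eq_integral_smul hw_meas]
        congr 1
        funext x
        rw [NNReal.smul_def, smul_eq_mul, hw_def]
        rw [Real.coe_toNNReal _ (hdens_pos x).le]
      -- relative entropy computation
      have hlog_bd : ∀ x, |Real.log (dens x)| ≤ 1 := by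
        intro x
        rw [abs_le]
        constructor
        · have h2 : Real.log ((dens x)⁻¹) ≤ (dens x)⁻¹ - 1 :=
            Real.log_le_sub_one_of_pos (inv_pos.2 (hdens_pos x))
          have h3 : (dens x)⁻¹ ≤ 2 := by
            rw [inv_le_comm₀ (hdens_pos x) (by norm_num)]
            exact le_trans (by norm_num) (hdens_lb x)
          rw [Real.log_inv] at h2
          have h4 : (dens x)⁻¹ ≤ 2 := h3
          linarith
        · have h2 : Real.log (dens x) ≤ dens x - 1 :=
            Real.log_le_sub_one_of_pos (hdens_pos x)
          have h6 : dens x ≤ 3/2 := hdens_ub2 x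
          linarith
      have hlogdens_cont : Continuous fun x => Real.log (dens x) :=
        Continuous.log hdens_cont (fun x => (hdens_pos x).ne')
      have hlogd_int_ν : Integrable (fun x => Real.log (dens x)) ν :=
        integrable_of_bounded hlogdens_cont hlog_bd
      have hrn : (fun x => Real.log ((ν.rnDeriv μ x).toReal)) =ᵐ[ν]
          fun x => Real.log (dens x) := by
        have h1 : ν.rnDeriv μ =ᵐ[μ] fun x => ((w x : ℝ≥0) : ℝ≥0∞) := by
          rw [hν_def]; exact Measure.rnDeriv_withDensity μ hw_meas.coe_nnreal_ennreal
        have h2 : ν.rnDeriv μ =ᵐ[ν] fun x => ((w x : ℝ≥0) : ℝ≥0∞) :=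
          hν_ac.ae_le h1
        filter_upwards [h2] with x hx
        rw [hx, hw_coe, ENNReal.toReal_ofReal (hdens_pos x).le]
      have hrn_int : Integrable (fun x => Real.log ((ν.rnDeriv μ x).toReal)) ν :=
        hlogd_int_ν.congr hrn.symm
      have hent : relEntropy ν μ = ENNReal.ofReal (∫ x, dens x * Real.log (dens x) ∂μ) := by
        rw [relEntropy, if_pos ⟨hν_ac, hrn_int⟩]
        congr 1
        rw [integral_congr_ae hrn, hν_int_eq]
      set I : ℝ := ∫ x, dens x * Real.log (dens x) ∂μ with hI_def
      clear_value I
      -- entropy upper bound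
      have habs3_cont : Continuous fun x : EuclideanSpace ℝ (Fin d) => |f x - m|^3 := by
        fun_prop
      have habs3_bd : ∀ x, abs (|f x - m|^3) ≤ B^3 := by
        intro x
        rw [abs_of_nonneg (by positivity)]
        exact pow_le_pow_left₀ (abs_nonneg _) (hB x) 3
      have habs3_int : Integrable (fun x : EuclideanSpace ℝ (Fin d) => |f x - m|^3) μ :=
        integrable_of_bounded habs3_cont habs3_bd
      have habs3_le : ∫ x, |f x - m|^3 ∂μ ≤ B * V := by
        rw [hV]
        have := integral_mono habs3_int (hfm2_int.const_mul B)
          (fun x => abs_cube_le (hB x))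
        rwa [integral_const_mul] at this
      have hIint : Integrable (fun x => dens x * Real.log (dens x)) μ :=
        integrable_of_bounded (hdens_cont.mul hlogdens_cont) (C := 3/2) (fun x => by
          rw [abs_mul]
          calc |dens x| * |Real.log (dens x)| ≤ (3/2) * 1 :=
                mul_le_mul (hdens_bd x) (hlog_bd x) (abs_nonneg _) (by norm_num)
            _ = 3/2 := by norm_num)
      have hdom_int : Integrable (fun x : EuclideanSpace ℝ (Fin d) =>
          ε*(f x - m) + (ε^2/2)*(f x - m)^2 + ε^3*|f x - m|^3) μ :=
        ((hfm_int.const_mul ε).add (hfm2_int.const_mul (ε^2/2))).add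
          (habs3_int.const_mul (ε^3))
      have hIle : I ≤ ε^2*V/2 + ε^3*B*V := by
        have hmono : I ≤ ∫ x, (ε*(f x - m) + (ε^2/2)*(f x - m)^2 + ε^3*|f x - m|^3) ∂μ := by
          rw [hI_def]
          apply integral_mono hIint hdom_int
          intro x
          have h1 := mul_log_le (u := ε*(f x - m)) (habs x)
          have e1 : (ε*(f x - m))^2/2 = (ε^2/2)*(f x - m)^2 := by ring
          have e2 : |ε*(f x - m)|^3 = ε^3*|f x - m|^3 := by
            rw [abs_mul, abs_of_nonneg hεpos.le]; ring
          simp only [hdens_def]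
          rw [e1, e2] at h1
          exact h1
        have hsplit : ∫ x, (ε*(f x - m) + (ε^2/2)*(f x - m)^2 + ε^3*|f x - m|^3) ∂μ
            = ε*(∫ x, (f x - m) ∂μ) + (ε^2/2)*(∫ x, (f x - m)^2 ∂μ)
              + ε^3*(∫ x, |f x - m|^3 ∂μ) := by
          have hi1 : Integrable (fun x : EuclideanSpace ℝ (Fin d) =>
              ε*(f x - m) + (ε^2/2)*(f x - m)^2) μ :=
            (hfm_int.const_mul ε).add (hfm2_int.const_mul (ε^2/2))
          have hi3 : Integrable (fun x : EuclideanSpace ℝ (Fin d) =>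
              ε^3*|f x - m|^3) μ := habs3_int.const_mul (ε^3)
          have hi4 : Integrable (fun x : EuclideanSpace ℝ (Fin d) =>
              (ε^2/2)*(f x - m)^2) μ := hfm2_int.const_mul (ε^2/2)
          rw [integral_add hi1 hi3,
            integral_add (hfm_int.const_mul ε) hi4,
            integral_const_mul, integral_const_mul, integral_const_mul]
        rw [hsplit, hmean, ← hV] at hmono
        have h3 : ε^3*(∫ x, |f x - m|^3 ∂μ) ≤ ε^3*(B*V) :=
          mul_le_mul_of_nonneg_left habs3_le (by positivity)
        calc I ≤ ε*0 + (ε^2/2)*V + ε^3*(∫ x, |f x - m|^3 ∂μ) := hmono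
          _ ≤ ε*0 + (ε^2/2)*V + ε^3*(B*V) := add_le_add le_rfl h3
          _ = ε^2*V/2 + ε^3*B*V := by ring
      -- the test function φ
      set φ : EuclideanSpace ℝ (Fin d) → ℝ :=
        fun x => s*(f x - m) - s^2*‖f' x‖^2/(4*c) with hφ_def
      clear_value φ
      have hφ_cont : Continuous φ := by
        simp only [hφ_def]
        fun_prop
      have hφ_bd : ∀ x, |φ x| ≤ s*B + s^2*CL^2/(4*c) := by
        intro x
        simp only [hφ_def]
        have h1 : |s*(f x - m)| ≤ s*B := by
          rw [abs_mul, abs_of_nonneg hs.le]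
          exact mul_le_mul_of_nonneg_left (hB x) hs.le
        have h2 : |s^2*‖f' x‖^2/(4*c)| ≤ s^2*CL^2/(4*c) := by
          rw [abs_of_nonneg (by positivity)]
          rw [div_le_div_iff_of_pos_right (by positivity : (0:ℝ) < 4*c)]
          exact mul_le_mul_of_nonneg_left
            (pow_le_pow_left₀ (norm_nonneg _) (hCL x) 2) (sq_nonneg s)
        calc |s*(f x - m) - s^2*‖f' x‖^2/(4*c)|
            ≤ |s*(f x - m)| + |s^2*‖f' x‖^2/(4*c)| := abs_sub _ _
          _ ≤ s*B + s^2*CL^2/(4*c) := add_le_add h1 h2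
      -- pointwise cost inequality
      have hkey : ∀ x y : EuclideanSpace ℝ (Fin d),
          φ x - s*(f y - m) ≤ min (dist x y^2) (dist x y) := by
        intro x y
        have e : φ x - s*(f y - m) = s*(f x - f y) - s^2*‖f' x‖^2/(4*c) := by
          simp only [hφ_def]; ring
        rw [e]
        exact key_pointwise hs hsL hc_def hcpos dist_nonneg (norm_nonneg _)
          (hflip x y) (taylor x y)
      -- transport lower bound
      have hTlow : ENNReal.ofReal (∫ x, φ x ∂ν) ≤
          transportCost (fun x y => ENNReal.ofReal (min (dist x y ^ 2) (dist x y))) ν μ := by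
        rw [transportCost]
        refine le_iInf fun π => le_iInf fun hπ => ?_
        obtain ⟨hπ1, hπ2⟩ := hπ
        haveI hπ_prob : IsProbabilityMeasure π := by
          constructor
          rw [← Measure.fst_univ, hπ1]
          exact measure_univ
        set ψ : EuclideanSpace ℝ (Fin d) × EuclideanSpace ℝ (Fin d) → ℝ :=
          fun p => φ p.1 - s*(f p.2 - m) with hψ_def
        clear_value ψ
        have hψ_cont : Continuous ψ := by
          simp only [hψ_def]
          fun_prop
        have hsnd_bd : ∀ p : EuclideanSpace ℝ (Fin d) × EuclideanSpace ℝ (Fin d),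
            |s*(f p.2 - m)| ≤ s*B := fun p => by
          rw [abs_mul, abs_of_nonneg hs.le]
          exact mul_le_mul_of_nonneg_left (hB p.2) hs.le
        have hψ_bd : ∀ p, |ψ p| ≤ (s*B + s^2*CL^2/(4*c)) + s*B := by
          intro p
          simp only [hψ_def]
          calc |φ p.1 - s*(f p.2 - m)| ≤ |φ p.1| + |s*(f p.2 - m)| := abs_sub _ _
            _ ≤ (s*B + s^2*CL^2/(4*c)) + s*B := add_le_add (hφ_bd p.1) (hsnd_bd p)
        have hψ_int : Integrable ψ π := integrable_of_bounded hψ_cont hψ_bd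
        have hint1 : Integrable (fun p : EuclideanSpace ℝ (Fin d) × EuclideanSpace ℝ (Fin d)
            => φ p.1) π :=
          integrable_of_bounded (hφ_cont.comp continuous_fst) (fun p => hφ_bd p.1)
        have hint2 : Integrable (fun p : EuclideanSpace ℝ (Fin d) × EuclideanSpace ℝ (Fin d)
            => s*(f p.2 - m)) π :=
          integrable_of_bounded (by fun_prop) hsnd_bd
        have hψint_eq : ∫ p, ψ p ∂π = ∫ x, φ x ∂ν := by
          simp only [hψ_def]
          rw [integral_sub hint1 hint2]
          have e1 : ∫ p, φ p.1 ∂π = ∫ x, φ x ∂ν := by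
            rw [← hπ1, Measure.fst,
              integral_map measurable_fst.aemeasurable hφ_cont.aestronglyMeasurable]
          have e2 : ∫ p, s*(f p.2 - m) ∂π = s * ∫ x, (f x - m) ∂μ := by
            rw [← hπ2, Measure.snd, integral_map measurable_snd.aemeasurable
              hfm_cont.aestronglyMeasurable, ← integral_const_mul]
          rw [e1, e2, hmean, mul_zero, sub_zero]
        have hmax_int : Integrable (fun p => max (ψ p) 0) π :=
          integrable_of_bounded (hψ_cont.max continuous_const) (fun p => by
            have h1 := abs_le.1 (hψ_bd p)
            have h0 : (0:ℝ) ≤ (s*B + s^2*CL^2/(4*c)) + s*B :=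
              le_trans (abs_nonneg _) (hψ_bd p)
            rw [abs_le]
            exact ⟨le_trans (neg_nonpos.mpr h0) (le_max_right _ _), max_le h1.2 h0⟩)
        calc ENNReal.ofReal (∫ x, φ x ∂ν)
            = ENNReal.ofReal (∫ p, ψ p ∂π) := by rw [hψint_eq]
          _ ≤ ENNReal.ofReal (∫ p, max (ψ p) 0 ∂π) :=
              ENNReal.ofReal_le_ofReal
                (integral_mono hψ_int hmax_int (fun p => le_max_left _ _))
          _ = ∫⁻ p, ENNReal.ofReal (max (ψ p) 0) ∂π :=
              ofReal_integral_eq_lintegral_ofReal hmax_int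
                (ae_of_all _ fun p => le_max_right _ _)
          _ = ∫⁻ p, ENNReal.ofReal (ψ p) ∂π := by
              apply lintegral_congr
              intro p
              rcases le_total (ψ p) 0 with h | h
              · rw [max_eq_right h, ENNReal.ofReal_zero,
                  ENNReal.ofReal_eq_zero.2 h]
              · rw [max_eq_left h]
          _ ≤ ∫⁻ p, ENNReal.ofReal (min (dist p.1 p.2 ^ 2) (dist p.1 p.2)) ∂π := by
              apply lintegral_mono
              intro p
              rw [hψ_def]
              exact ENNReal.ofReal_le_ofReal (hkey p.1 p.2)
      -- compute ∫ φ dν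
      have hfmν : ∫ x, (f x - m) ∂ν = ε*V := by
        rw [hν_int_eq]
        have e : (fun x => dens x * (f x - m))
            = fun x => (f x - m) + ε*(f x - m)^2 := by
          funext x; simp only [hdens_def]; ring
        rw [e, integral_add hfm_int (hfm2_int.const_mul ε), hmean, integral_const_mul,
          ← hV]
        ring
      have hg2_int_ν : Integrable (fun x : EuclideanSpace ℝ (Fin d) => ‖f' x‖^2) ν :=
        integrable_of_bounded hg2_cont hg2_bd
      have hfm_int_ν : Integrable (fun x : EuclideanSpace ℝ (Fin d) => f x - m) ν :=
        integrable_of_bounded hfm_cont hB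
      have hφν : ∫ x, φ x ∂ν = s*(ε*V) - s^2*(∫ x, ‖f' x‖^2 ∂ν)/(4*c) := by
        simp only [hφ_def]
        rw [integral_sub (hfm_int_ν.const_mul s)
          ((hg2_int_ν.const_mul (s^2)).div_const (4*c) : Integrable
            (fun x => s^2*‖f' x‖^2/(4*c)) ν),
          integral_const_mul, hfmν, integral_div, integral_const_mul]
      have hGν : ∫ x, ‖f' x‖^2 ∂ν ≤ (1+ε*B)*G := by
        rw [hν_int_eq, hG]
        have hmul_int : Integrable (fun x => dens x * ‖f' x‖^2) μ :=
          integrable_of_bounded (hdens_cont.mul hg2_cont) (C := (3/2)*CL^2) (fun x => by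
            rw [abs_mul]
            exact mul_le_mul (hdens_bd x) (hg2_bd x) (abs_nonneg _) (by norm_num))
        calc ∫ x, dens x * ‖f' x‖^2 ∂μ
            ≤ ∫ x, (1+ε*B) * ‖f' x‖^2 ∂μ :=
              integral_mono hmul_int (hg2_int.const_mul _)
                (fun x => mul_le_mul_of_nonneg_right (hdens_ub x) (sq_nonneg _))
          _ = (1+ε*B) * ∫ x, ‖f' x‖^2 ∂μ := integral_const_mul _ _
      have hGν0 : 0 ≤ ∫ x, ‖f' x‖^2 ∂ν := integral_nonneg fun x => sq_nonneg _
      have hA : s*ε*V - s^2*((1+ε*B)*G)/(4*c) ≤ ∫ x, φ x ∂ν := by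
        rw [hφν]
        have hdiv : s^2*(∫ x, ‖f' x‖^2 ∂ν)/(4*c) ≤ s^2*((1+ε*B)*G)/(4*c) := by
          rw [div_le_div_iff_of_pos_right (by positivity : (0:ℝ) < 4*c)]
          exact mul_le_mul_of_nonneg_left hGν (sq_nonneg s)
        have e : s*(ε*V) = s*ε*V := by ring
        linarith
      -- combine
      have hchain := hT ν hν_prob
      rw [hent] at hchain
      have h1 : ENNReal.ofReal (∫ x, φ x ∂ν) ≤ ENNReal.ofReal C₂ * ENNReal.ofReal I :=
        le_trans hTlow hchain
      have h2 : ENNReal.ofReal (∫ x, φ x ∂ν)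
          ≤ ENNReal.ofReal (C₂*(ε^2*V/2 + ε^3*B*V)) := by
        refine le_trans h1 ?_
        rw [← ENNReal.ofReal_mul hC₂.le]
        exact ENNReal.ofReal_le_ofReal (mul_le_mul_of_nonneg_left hIle hC₂.le)
      have h3 : ∫ x, φ x ∂ν ≤ C₂*(ε^2*V/2 + ε^3*B*V) := by
        have hrhs : 0 ≤ C₂*(ε^2*V/2 + ε^3*B*V) := by positivity
        exact (ENNReal.ofReal_le_ofReal_iff hrhs).1 h2
      have h4 : s*ε*V - s^2*((1+ε*B)*G)/(4*c) ≤ C₂*(ε^2*V/2 + ε^3*B*V) :=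
        le_trans hA h3
      -- divide by ε²
      have hcne : (1:ℝ) - l*ε*M ≠ 0 := by
        have h9 := hcpos
        rw [hc_def, hs_def] at h9
        exact h9.ne'
      rw [← mul_le_mul_iff_of_pos_right (pow_pos hεpos 2)]
      have e1 : (l*V - l^2*(1+ε*B)*G/(4*c))*ε^2
          = s*ε*V - s^2*((1+ε*B)*G)/(4*c) := by
        rw [hc_def, hs_def]
        field_simp [hcne]
      have e2 : C₂*(V/2 + ε*B*V)*ε^2 = C₂*(ε^2*V/2 + ε^3*B*V) := by ring
      rw [e1, e2]
      exact h4
    have hFlim : Tendsto (fun ε : ℝ => l*V - l^2*(1+ε*B)*G/(4*(1-l*ε*M))) (𝓝[>] (0:ℝ))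
        (𝓝 (l*V - l^2*G/4)) := by
      have hc : ContinuousAt (fun ε : ℝ => l*V - l^2*(1+ε*B)*G/(4*(1-l*ε*M))) 0 := by
        apply ContinuousAt.sub continuousAt_const
        apply ContinuousAt.div (by fun_prop) (by fun_prop)
        norm_num
      have h2 := hc.tendsto.mono_left (nhdsWithin_le_nhds : 𝓝[>] (0:ℝ) ≤ _)
      convert h2 using 2
      norm_num
    have hRlim : Tendsto (fun ε : ℝ => C₂*(V/2 + ε*B*V)) (𝓝[>] (0:ℝ)) (𝓝 (C₂*V/2)) := by
      have hc : ContinuousAt (fun ε : ℝ => C₂*(V/2 + ε*B*V)) 0 := by fun_prop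
      have h2 := hc.tendsto.mono_left (nhdsWithin_le_nhds : 𝓝[>] (0:ℝ) ≤ _)
      convert h2 using 2
      norm_num
      ring
    exact le_of_tendsto_of_tendsto hFlim hRlim
      (eventually_of_mem (Ioo_mem_nhdsGT_of_mem ⟨le_rfl, hε₀pos⟩) main)
  rcases eq_or_lt_of_le hV0 with hV0' | hVpos
  · rw [← hV0']
    positivity
  rcases eq_or_lt_of_le hG0 with hG0' | hGpos
  · exfalso
    have h1 := key C₂ hC₂
    rw [← hG0'] at h1
    have h2 : 0 < C₂ * V := mul_pos hC₂ hVpos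
    linarith
  · have h1 := key (2*V/G) (by positivity)
    have e : (2*V/G)*V - (2*V/G)^2*G/4 = V^2/G := by
      field_simp
      ring
    rw [e] at h1
    rw [div_le_iff₀ hGpos] at h1
    apply le_of_mul_le_mul_right _ hVpos
    calc V * V = V^2 := by ring
      _ ≤ C₂*V/2*G := h1
      _ = C₂/2*G*V := by ring
end
end
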